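/- arXiv:2109.11310 — 9 statements merged into one kernel-verified Lean document; each statement's English description precedes it below -/
import Mathlib

section
/- Let t ≥ 2 and n ≥ 1 be integers, let ω ∈ ℂ be a primitive t-th root of unity, and let λ be a partition of length at most tn. Suppose that n_q(λ,tn) ≠ n for some 0 ≤ q ≤ t−1 (equivalently, the t-core of λ is nonempty). Then for every choice of x_1,…,x_n ∈ ℂ, the tn × tn matrix M, whose rows are indexed by pairs (p,i) with 0 ≤ p ≤ t−1 and 1 ≤ i ≤ n, whose columns are indexed by 1 ≤ j ≤ tn, and whose entries are M_{(p,i),j} = (ω^p x_i)^{β_j(λ)}, has determinant 0. In particular the Schur polynomial of λ evaluated at the tn numbers ω^p x_i (0 ≤ p ≤ t−1, 1 ≤ i ≤ n) vanishes. -/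
open BigOperators

/-- The beta set of a partition `lam` of length at most `m`:
`β_j(λ) = λ_j + m - j` (0-indexed: `β j = λ j + (m - 1 - j)`). -/
def betaSet (m : ℕ) (lam : Fin m → ℕ) (j : Fin m) : ℕ :=
  lam j + (m - 1 - (j : ℕ))

/-- `n_i(λ, m)`: the number of entries of the beta set congruent to `i` mod `t`. -/
def ncount (t m : ℕ) (lam : Fin m → ℕ) (i : ℕ) : ℕ :=
  (Finset.univ.filter fun j : Fin m => betaSet m lam j % t = i).card

/-- The Schur polynomial of a partition `mu` of length at most `N`, evaluated at
complex numbers `y`, as a ratio of a generalized Vandermonde determinant and the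
Vandermonde determinant. -/
noncomputable def schur (N : ℕ) (mu : Fin N → ℕ) (y : Fin N → ℂ) : ℂ :=
  Matrix.det (Matrix.of fun i j : Fin N => y i ^ betaSet N mu j) /
    Matrix.det (Matrix.of fun i j : Fin N => y i ^ (N - 1 - (j : ℕ)))

/-- If some `n_q(λ, tn) ≠ n` (equivalently, the `t`-core of `λ` is nonempty) then the
`tn × tn` matrix with rows indexed by pairs `(p, i)` and entries `(ω^p x_i)^{β_j(λ)}`
has determinant `0`; in particular the Schur polynomial of `λ` evaluated at the numbers
`ω^p x_i` vanishes. -/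
theorem schur_twisted_vanishing
    (t n : ℕ) (ht : 2 ≤ t) (hn : 1 ≤ n)
    (ω : ℂ) (hω : IsPrimitiveRoot ω t)
    (lam : Fin (t * n) → ℕ)
    (hanti : ∀ j k : Fin (t * n), j ≤ k → lam k ≤ lam j)
    (hcore : ∃ q < t, ncount t (t * n) lam q ≠ n)
    (x : Fin n → ℂ) :
    Matrix.det (Matrix.of fun r j : Fin (t * n) =>
        (ω ^ (((finProdFinEquiv.symm r).1 : ℕ)) * x (finProdFinEquiv.symm r).2)
          ^ betaSet (t * n) lam j) = 0
    ∧ schur (t * n) lam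
        (fun r => ω ^ (((finProdFinEquiv.symm r).1 : ℕ)) * x (finProdFinEquiv.symm r).2)
      = 0 := by
  suffices hdet : Matrix.det (Matrix.of fun r j : Fin (t * n) =>
      (ω ^ (((finProdFinEquiv.symm r).1 : ℕ)) * x (finProdFinEquiv.symm r).2)
        ^ betaSet (t * n) lam j) = 0 by
    refine ⟨hdet, ?_⟩
    unfold schur
    rw [hdet, zero_div]
  -- find a residue class q with more than n beta numbers
  obtain ⟨q, hq⟩ : ∃ q, n < ncount t (t * n) lam q := by
    by_contra h
    push_neg at h
    obtain ⟨q0, hq0t, hq0⟩ := hcore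
    have hsum : ∑ q ∈ Finset.range t, ncount t (t * n) lam q
        = (Finset.univ : Finset (Fin (t * n))).card := by
      rw [Finset.card_eq_sum_card_fiberwise
        (f := fun j : Fin (t * n) => betaSet (t * n) lam j % t) (t := Finset.range t)]
      · rfl
      · intro j _
        exact Finset.mem_range.mpr (Nat.mod_lt _ (by omega))
    rw [Finset.card_univ, Fintype.card_fin] at hsum
    have hlt : ∑ q ∈ Finset.range t, ncount t (t * n) lam q
        < ∑ _q ∈ Finset.range t, n := by
      refine Finset.sum_lt_sum (fun i _ => h i)
        ⟨q0, Finset.mem_range.mpr hq0t, lt_of_le_of_ne (h q0) hq0⟩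
    rw [hsum, Finset.sum_const, Finset.card_range, smul_eq_mul, mul_comm] at hlt
    omega
  set S : Finset (Fin (t * n)) :=
    Finset.univ.filter (fun j => betaSet (t * n) lam j % t = q) with hSdef
  have hcard : n < S.card := hq
  -- the corresponding power vectors in ℂ^n are linearly dependent
  have hdep : ¬ LinearIndependent ℂ
      (fun j : ↥S => fun i : Fin n => x i ^ betaSet (t * n) lam j) := by
    intro hli
    have h1 := hli.fintype_card_le_finrank
    rw [Module.finrank_fintype_fun_eq_card, Fintype.card_fin, Fintype.card_coe] at h1
    omega
  obtain ⟨g, hgsum, j0, hj0⟩ := Fintype.not_linearIndependent_iff.mp hdep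
  -- build the kernel vector
  classical
  set c : Fin (t * n) → ℂ := fun j => if h : j ∈ S then g ⟨j, h⟩ else 0 with hcdef
  rw [← Matrix.exists_mulVec_eq_zero_iff]
  refine ⟨c, ?_, ?_⟩
  · intro hc0
    apply hj0
    have := congrFun hc0 (j0 : Fin (t * n))
    simpa [hcdef, j0.2] using this
  · funext r
    have hsum_i : ∀ i : Fin n, ∑ j : ↥S, g j * x i ^ betaSet (t * n) lam j = 0 := by
      intro i
      have := congrFun hgsum i
      simpa [Finset.sum_apply, mul_comm] using this
    have hωq : ∀ j : Fin (t * n), j ∈ S → ω ^ betaSet (t * n) lam j = ω ^ q := by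
      intro j hj
      rw [pow_eq_pow_mod (betaSet (t * n) lam j) hω.pow_eq_one]
      congr 1
      simpa [hSdef] using hj
    show ∑ j, _ * c j = 0
    rw [← Finset.sum_subset (Finset.subset_univ S)
      (by intro j _ hj; simp [hcdef, hj])]
    rw [← Finset.sum_attach S]
    have key : ∀ j : ↥S,
        (Matrix.of fun r j : Fin (t * n) =>
          (ω ^ (((finProdFinEquiv.symm r).1 : ℕ)) * x (finProdFinEquiv.symm r).2)
            ^ betaSet (t * n) lam j) r (j : Fin (t * n)) * c (j : Fin (t * n))
        = (ω ^ q) ^ (((finProdFinEquiv.symm r).1 : ℕ)) *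
          (g j * x (finProdFinEquiv.symm r).2 ^ betaSet (t * n) lam (j : Fin (t * n))) := by
      intro j
      have hc : c (j : Fin (t * n)) = g j := by simp [hcdef, j.2]
      rw [Matrix.of_apply, hc, mul_pow, ← pow_mul, mul_comm ((finProdFinEquiv.symm r).1 : ℕ),
        pow_mul, hωq _ j.2]
      ring
    rw [Finset.sum_congr rfl (fun j _ => key j), ← Finset.mul_sum]
    simp only [Finset.univ_eq_attach] at hsum_i
    rw [hsum_i (finProdFinEquiv.symm r).2, mul_zero]
end

section
/- Let t ≥ 2 and n ≥ 1 be integers, let ω ∈ ℂ be a primitive t-th root of unity, and let λ be a partition of length at most tn with n_q(λ,tn) = n for every 0 ≤ q ≤ t−1 (equivalently, the t-core of λ is empty). Let x_1,…,x_n ∈ ℂ be nonzero with x_1^t,…,x_n^t pairwise distinct. Then s_λ(X, ωX, …, ω^{t−1}X) = (−1)^{(t(t−1)/2)·(n(n+1)/2)} · sgn(σ_λ) · ∏_{q=0}^{t−1} s_{λ^{(q)}}(x_1^t,…,x_n^t), where the left-hand side is the Schur polynomial of λ evaluated at the tn pairwise distinct nonzero numbers ω^p x_i (0 ≤ p ≤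 t−1, 1 ≤ i ≤ n). -/
open BigOperators

/-- The entries of the beta set congruent to `q` mod `t`, sorted increasingly. -/
def qList (t m : ℕ) (lam : Fin m → ℕ) (q : ℕ) : List ℕ :=
  Finset.sort
    ((Finset.univ.filter fun j : Fin m => betaSet m lam j % t = q).image (betaSet m lam)) (· ≤ ·)

/-- The `q`-th quotient partition of `λ` (0-indexed part `j`):
`λ^{(q)}_{j+1} = (β^{(q)}_{j+1} - q)/t - (n_q - 1 - j)`, where
`β^{(q)}_1 > β^{(q)}_2 > ⋯` are the beta numbers congruent to `q` mod `t`. -/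
def quotPart (t m : ℕ) (lam : Fin m → ℕ) (q : ℕ) (j : ℕ) : ℕ :=
  ((qList t m lam q).getD (ncount t m lam q - 1 - j) 0 - q) / t
    - (ncount t m lam q - 1 - j)

/-- `N(λ)`: the number of pairs `j < k` with `(β_j mod t) > (β_k mod t)`;
`sgn σ_λ = (-1)^{N(λ)}`. -/
def invCount (t m : ℕ) (lam : Fin m → ℕ) : ℕ :=
  (Finset.univ.filter fun jk : Fin m × Fin m =>
    jk.1 < jk.2 ∧ betaSet m lam jk.2 % t < betaSet m lam jk.1 % t).card


/-!
Write the `t n` evaluation points as `ω ^ p * x i`. Sorting the columns of the alternant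
`det (y_r ^ β_j)` by the residue of `β_j` modulo `t` (i.e. reading the `t`-abacus of `λ` runner by
runner) costs the sign `sgn σ_λ`. Afterwards the entry in row `(p, i)` and column `(q, j)` is
`(ω ^ p * x i) ^ (t μ + q) = ω ^ (p q) * (x i ^ q * (x i ^ t) ^ μ)`, where `μ` is the `j`-th beta
number of `λ^(q)`: a Kronecker product of the character table `(ω ^ (p q))` with the identity,
times a block-diagonal matrix. Hence the alternant equals
`sgn σ_λ * det (ω ^ (p q)) ^ n * ∏ q, ∏ i, x i ^ q * ∏ q, det ((x i ^ t) ^ μ)`. The empty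
partition has the same shape, with quotients empty and sign `(-1) ^ (C(t, 2) * C(n + 1, 2))`,
and dividing the two alternants gives the factorization.
-/

open Finset Matrix

theorem Equiv.Perm.sign_eq_neg_one_pow_card_inversions {m : ℕ} (σ : Perm (Fin m)) :
    sign σ = (-1) ^ #{p : Fin m × Fin m | p.1 < p.2 ∧ σ p.2 < σ p.1} := by
  rw [sign_eq_prod_prod_Ioi, ← prod_const, prod_filter, Fintype.prod_prod_type]
  refine prod_congr rfl fun i _ => ?_
  rw [← filter_lt_eq_Ioi, prod_filter]
  refine prod_congr rfl fun j _ => ?_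
  by_cases hij : i < j
  · rcases (σ.injective.ne hij.ne).lt_or_gt with h | h <;> simp [hij, h, h.not_gt]
  · simp [hij]

theorem Fintype.card_product_filter_le {α : Type*} [Fintype α] [LinearOrder α] :
    #{x : α × α | x.1 ≤ x.2} = (Fintype.card α + 1).choose 2 := by
  have hsplit : ({x : α × α | x.1 ≤ x.2} : Finset (α × α)) =
      ({x : α × α | x.1 < x.2} : Finset (α × α)) ∪
        ({x : α × α | x.1 = x.2} : Finset (α × α)) := by
    ext x; simp [le_iff_lt_or_eq]
  have hdiag : #{x : α × α | x.1 = x.2} = Fintype.card α := by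
    rw [← card_univ, ← (univ : Finset α).diag_card, diag_eq_filter, univ_product_univ]
  rw [hsplit, card_union_of_disjoint (disjoint_filter.2 fun x _ h => h.ne),
    Fintype.card_product_filter_lt, hdiag, Nat.choose_succ_succ', Nat.choose_one_right, add_comm]

theorem finProdFinEquiv_lt_finProdFinEquiv {m n : ℕ} {a b : Fin m × Fin n} :
    finProdFinEquiv a < finProdFinEquiv b ↔ a.1 < b.1 ∨ a.1 = b.1 ∧ a.2 < b.2 := by
  obtain ⟨⟨p, hp⟩, ⟨i, hi⟩⟩ := a
  obtain ⟨⟨q, hq⟩, ⟨j, hj⟩⟩ := b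
  simp only [Fin.lt_def, finProdFinEquiv_apply_val, Fin.mk.injEq]
  rcases lt_trichotomy p q with h | rfl | h
  · have : n * p + n ≤ n * q := by nlinarith
    omega
  · omega
  · have : n * q + n ≤ n * p := by nlinarith
    omega

theorem Nat.div_lt_div_of_lt_of_mod_eq_mod {a b t : ℕ} (h : a < b) (hab : a % t = b % t) :
    a / t < b / t := by
  by_contra! hle
  have := Nat.mul_le_mul_left t hle
  have := Nat.div_add_mod a t
  have := Nat.div_add_mod b t
  omega

theorem Nat.lt_and_mod_lt_iff_mod_lt_and_div_le {a b t : ℕ} :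
    b < a ∧ b % t < a % t ↔ b % t < a % t ∧ b / t ≤ a / t := by
  refine ⟨fun ⟨h, hm⟩ => ⟨hm, Nat.div_le_div_right h.le⟩, fun ⟨hm, hd⟩ => ⟨?_, hm⟩⟩
  have := Nat.mul_le_mul_left t hd
  have := Nat.div_add_mod a t
  have := Nat.div_add_mod b t
  omega

theorem mul_pow_mul_add_of_pow_eq_one {M : Type*} [CommMonoid M] {ω : M} {t : ℕ}
    (hω : ω ^ t = 1) (x : M) (p q μ : ℕ) :
    (ω ^ p * x) ^ (t * μ + q) = ω ^ (p * q) * (x ^ q * (x ^ t) ^ μ) := by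
  rw [mul_pow, ← pow_mul, pow_add x, pow_mul x, mul_comm ((x ^ t) ^ μ),
    show p * (t * μ + q) = t * (p * μ) + p * q by ring, pow_add, pow_mul ω t, hω, one_pow, one_mul]

section StrictAnti

variable {n : ℕ} {f : Fin n → ℕ}

theorem StrictAnti.rev_le_apply (hf : StrictAnti f) (j : Fin n) : n - 1 - j ≤ f j :=
  calc n - 1 - j = #(Ioi j) := (Fin.card_Ioi j).symm
    _ ≤ #(range (f j)) :=
      card_le_card_of_injOn f (fun _ hk => mem_range.2 (hf (mem_Ioi.1 hk))) hf.injective.injOn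
    _ = f j := card_range _

theorem StrictAnti.apply_eq_rev (hf : StrictAnti f) (hlt : ∀ j, f j < n) (j : Fin n) :
    f j = n - 1 - j := by
  have : (j : ℕ) ≤ n - f j - 1 :=
    calc (j : ℕ) = #(Iio j) := (Fin.card_Iio j).symm
      _ ≤ #(Ioo (f j) n) := card_le_card_of_injOn f
          (fun k hk => mem_Ioo.2 ⟨hf (mem_Iio.1 hk), hlt k⟩) hf.injective.injOn
      _ = n - f j - 1 := Nat.card_Ioo _ _
  have := hf.rev_le_apply j
  have := hlt j
  omega

end StrictAnti

section Determinants

variable {m n R : Type*} [Fintype m] [DecidableEq m] [Fintype n] [DecidableEq n] [CommRing R]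

theorem Matrix.det_eq_sign_mul_det_submatrix (e₁ e₂ : m ≃ n) (A : Matrix n n R) :
    det A = Equiv.Perm.sign (e₂.symm.trans e₁) * det (A.submatrix e₁ e₂) := by
  have h : det (A.submatrix e₁ e₂) = Equiv.Perm.sign (e₂.symm.trans e₁) * det A := by
    rw [← Equiv.Perm.sign_symm, ← det_permute', ← det_submatrix_equiv_self e₁ (A.submatrix id _)]
    congr 1; ext i j; simp
  rw [h, ← mul_assoc, ← Int.cast_mul, ← Units.val_mul, Int.units_mul_self, Units.val_one,
    Int.cast_one, one_mul]

theorem Matrix.det_of_mul_block (W : Matrix m m R) (B : m → Matrix n n R) :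
    det (of fun a b : m × n => W a.1 b.1 * B b.1 a.2 b.2) =
      det W ^ Fintype.card n * ∏ k, det (B k) := by
  have : of (fun a b : m × n => W a.1 b.1 * B b.1 a.2 b.2) =
      kroneckerMap (· * ·) W 1 *
        (blockDiagonal B).submatrix (Equiv.prodComm m n) (Equiv.prodComm m n) := by
    ext ⟨p, i⟩ ⟨q, j⟩
    simp only [of_apply, mul_apply, Fintype.sum_prod_type, kroneckerMap_apply, one_apply,
      submatrix_apply, Equiv.prodComm_apply, Prod.swap_prod_mk, blockDiagonal_apply, mul_ite,
      mul_zero, mul_one, ite_mul, zero_mul]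
    rw [Finset.sum_comm]
    simp [Finset.sum_ite_eq']
  rw [this, det_mul, det_kronecker, det_one, one_pow, mul_one, det_submatrix_equiv_self,
    det_blockDiagonal]

theorem Matrix.det_of_pow_rev_ne_zero [IsDomain R] {k : ℕ} {v : Fin k → R}
    (hv : Function.Injective v) : det (of fun i j : Fin k => v i ^ (k - 1 - j)) ≠ 0 := by
  have : of (fun i j : Fin k => v i ^ (k - 1 - j)) =
      (vandermonde v).submatrix id Fin.revPerm := by
    ext i j
    simp only [of_apply, submatrix_apply, vandermonde_apply, id, Fin.revPerm_apply, Fin.val_rev]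
    congr 1; omega
  rw [this, det_permute']
  refine mul_ne_zero ?_ (det_vandermonde_ne_zero_iff.2 hv)
  rcases Int.units_eq_one_or (Equiv.Perm.sign (Fin.revPerm (n := k))) with h | h <;> simp [h]

theorem IsPrimitiveRoot.det_of_pow_mul_ne_zero [IsDomain R] {ω : R} {t : ℕ}
    (hω : IsPrimitiveRoot ω t) : det (of fun p q : Fin t => ω ^ ((p : ℕ) * q)) ≠ 0 := by
  have : of (fun p q : Fin t => ω ^ ((p : ℕ) * q)) =
      vandermonde fun p : Fin t => ω ^ (p : ℕ) := by
    ext p q; simp [vandermonde_apply, pow_mul]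
  rw [this, det_vandermonde_ne_zero_iff]
  exact fun p q h => Fin.ext (hω.pow_inj p.isLt q.isLt h)

end Determinants

section SortByClass

variable {t n : ℕ} (c : Fin (t * n) → ℕ) (hc : ∀ q : Fin t, #{j | c j = q} = n)

def classEnum (q : Fin t) : Fin n ↪o Fin (t * n) :=
  orderEmbOfFin {j | c j = q} (hc q)

theorem apply_classEnum (q : Fin t) (i : Fin n) : c (classEnum c hc q i) = q :=
  (mem_filter.1 <| orderEmbOfFin_mem {j | c j = (q : ℕ)} (hc q) i).2

noncomputable def sortByClass : Fin t × Fin n ≃ Fin (t * n) :=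
  Equiv.ofBijective (fun a => classEnum c hc a.1 a.2) <| by
    refine (Fintype.bijective_iff_injective_and_card _).2 ⟨?_, by simp⟩
    rintro ⟨q, i⟩ ⟨q', i'⟩ h
    obtain rfl : q = q' := Fin.ext <| by
      simpa only [apply_classEnum] using congrArg c h
    simpa using (classEnum c hc q).injective h

theorem apply_sortByClass (a : Fin t × Fin n) : c (sortByClass c hc a) = a.1 :=
  apply_classEnum c hc a.1 a.2

theorem sortByClass_strictMono (q : Fin t) : StrictMono fun i => sortByClass c hc (q, i) :=
  (classEnum c hc q).strictMono

theorem sign_sortByClass :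
    Equiv.Perm.sign ((sortByClass c hc).symm.trans finProdFinEquiv) =
      (-1) ^ #{p : Fin (t * n) × Fin (t * n) | p.1 < p.2 ∧ c p.2 < c p.1} := by
  rw [Equiv.Perm.sign_eq_neg_one_pow_card_inversions]
  congr 2
  ext ⟨j, k⟩
  simp only [mem_filter, mem_univ, true_and, and_congr_right_iff]
  intro hjk
  obtain ⟨a, rfl⟩ := (sortByClass c hc).surjective j
  obtain ⟨b, rfl⟩ := (sortByClass c hc).surjective k
  simp only [Equiv.trans_apply, Equiv.symm_apply_apply, apply_sortByClass,
    finProdFinEquiv_lt_finProdFinEquiv, Fin.val_fin_lt]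
  refine ⟨?_, Or.inl⟩
  rintro (h | ⟨h, h'⟩)
  · exact h
  · obtain ⟨q, i⟩ := a
    obtain ⟨q', i'⟩ := b
    obtain rfl : q' = q := h
    exact absurd ((sortByClass_strictMono c hc q').lt_iff_lt.1 hjk) (asymm h')

end SortByClass

theorem betaSet_strictAnti {m : ℕ} {lam : Fin m → ℕ}
    (hanti : ∀ j k : Fin m, j ≤ k → lam k ≤ lam j) : StrictAnti (betaSet m lam) := by
  intro j k hjk
  have := hanti j k hjk.le
  have : (j : ℕ) < k := hjk
  have := k.isLt
  unfold betaSet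
  omega

section Abacus

variable {t n : ℕ} {lam : Fin (t * n) → ℕ} (hcore : ∀ q < t, ncount t (t * n) lam q = n)

noncomputable def abacusEquiv : Fin t × Fin n ≃ Fin (t * n) :=
  sortByClass (fun j => betaSet (t * n) lam j % t) fun q => hcore q q.isLt

theorem betaSet_abacusEquiv_mod (q : Fin t) (j : Fin n) :
    betaSet (t * n) lam (abacusEquiv hcore (q, j)) % t = q :=
  apply_sortByClass (fun j => betaSet (t * n) lam j % t) _ (q, j)

theorem sign_abacusEquiv :
    Equiv.Perm.sign ((abacusEquiv hcore).symm.trans finProdFinEquiv) =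
      (-1) ^ invCount t (t * n) lam :=
  sign_sortByClass _ _

theorem qList_getD_eq (hanti : ∀ j k : Fin (t * n), j ≤ k → lam k ≤ lam j) (q : Fin t)
    (j : Fin n) :
    (qList t (t * n) lam q).getD (n - 1 - j) 0 =
      betaSet (t * n) lam (abacusEquiv hcore (q, j)) := by
  set s := ({j | betaSet (t * n) lam j % t = q} : Finset (Fin (t * n))).image
    (betaSet (t * n) lam)
  have hs : #s = n := by
    rw [card_image_of_injective _ (betaSet_strictAnti hanti).injective]
    exact hcore q q.isLt
  have hsort :
      (fun k => betaSet (t * n) lam (abacusEquiv hcore (q, k.rev))) = s.orderEmbOfFin hs :=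
    orderEmbOfFin_unique hs
      (fun k => mem_image_of_mem _ (mem_filter.2 ⟨mem_univ _, betaSet_abacusEquiv_mod hcore _ _⟩))
      fun a b hab => betaSet_strictAnti hanti (sortByClass_strictMono _ _ q (Fin.rev_lt_rev.2 hab))
  have hj : n - 1 - (j : ℕ) = j.rev := by rw [Fin.val_rev]; omega
  calc (qList t (t * n) lam q).getD (n - 1 - j) 0 = s.orderEmbOfFin hs j.rev := by
        rw [hj, orderEmbOfFin_apply, List.getD_eq_getElem]
        rfl
    _ = _ := by simp [← hsort]

theorem strictAnti_betaSet_abacusEquiv_div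
    (hanti : ∀ j k : Fin (t * n), j ≤ k → lam k ≤ lam j) (q : Fin t) :
    StrictAnti fun j => betaSet (t * n) lam (abacusEquiv hcore (q, j)) / t :=
  fun _ _ hij => Nat.div_lt_div_of_lt_of_mod_eq_mod
    (betaSet_strictAnti hanti (sortByClass_strictMono _ _ q hij))
    (by rw [betaSet_abacusEquiv_mod, betaSet_abacusEquiv_mod])

theorem betaSet_quotPart (hanti : ∀ j k : Fin (t * n), j ≤ k → lam k ≤ lam j) (q : Fin t)
    (j : Fin n) :
    betaSet n (fun i => quotPart t (t * n) lam q i) j =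
      betaSet (t * n) lam (abacusEquiv hcore (q, j)) / t := by
  have hlow := (strictAnti_betaSet_abacusEquiv_div hcore hanti q).rev_le_apply j
  have hdiv := Nat.div_add_mod (betaSet (t * n) lam (abacusEquiv hcore (q, j))) t
  rw [betaSet_abacusEquiv_mod] at hdiv
  -- `hlow` rules out truncation in the subtraction that defines `quotPart`.
  show quotPart t (t * n) lam q j + (n - 1 - j) = _
  rw [quotPart, hcore q q.isLt, qList_getD_eq hcore hanti,
    show betaSet (t * n) lam (abacusEquiv hcore (q, j)) - q =
      t * (betaSet (t * n) lam (abacusEquiv hcore (q, j)) / t) by omega,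
    Nat.mul_div_cancel_left _ q.pos]
  omega

theorem betaSet_abacusEquiv (hanti : ∀ j k : Fin (t * n), j ≤ k → lam k ≤ lam j) (q : Fin t)
    (j : Fin n) :
    betaSet (t * n) lam (abacusEquiv hcore (q, j)) =
      t * betaSet n (fun i => quotPart t (t * n) lam q i) j + q := by
  have := Nat.div_add_mod (betaSet (t * n) lam (abacusEquiv hcore (q, j))) t
  rwa [betaSet_abacusEquiv_mod, ← betaSet_quotPart hcore hanti, eq_comm] at this

end Abacus

section EmptyPartition

variable {t n : ℕ}

theorem betaSet_zero {m : ℕ} (j : Fin m) : betaSet m (fun _ => 0) j = m - 1 - j :=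
  zero_add _

def revDigits : Fin (t * n) ≃ Fin t × Fin n :=
  Fin.revPerm.trans
    ((finCongr (mul_comm t n)).trans (finProdFinEquiv.symm.trans (Equiv.prodComm _ _)))

theorem revDigits_fst (j : Fin (t * n)) : ((revDigits j).1 : ℕ) = (t * n - 1 - j) % t := by
  simp [revDigits, Fin.val_rev, Nat.sub_sub, add_comm]

theorem revDigits_snd (j : Fin (t * n)) : ((revDigits j).2 : ℕ) = (t * n - 1 - j) / t := by
  simp [revDigits, Fin.val_rev, Nat.sub_sub, add_comm]

theorem ncount_zero {q : ℕ} (hq : q < t) : ncount t (t * n) (fun _ => 0) q = n :=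
  calc ncount t (t * n) (fun _ => 0) q = #({⟨q, hq⟩} ×ˢ univ : Finset (Fin t × Fin n)) :=
        card_equiv revDigits fun j => by
          simp only [mem_filter, mem_univ, true_and, mem_product, mem_singleton, and_true,
            Fin.ext_iff, betaSet_zero, revDigits_fst]
    _ = n := by simp

theorem invCount_zero :
    invCount t (t * n) (fun _ => 0) = t * (t - 1) / 2 * (n * (n + 1) / 2) := by
  have : invCount t (t * n) (fun _ => 0) =
      #(({a : Fin t × Fin t | a.1 < a.2} : Finset _) ×ˢ
        ({b : Fin n × Fin n | b.1 ≤ b.2} : Finset _)) :=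
    card_equiv ((Equiv.prodComm _ _).trans ((revDigits.prodCongr revDigits).trans
      (Equiv.prodProdProdComm _ _ _ _))) fun ⟨j, k⟩ => by
        simp only [mem_filter, mem_univ, true_and, mem_product, Equiv.trans_apply,
          Equiv.prodComm_apply, Prod.swap_prod_mk, Equiv.prodCongr_apply, Prod.map,
          Equiv.prodProdProdComm_apply, Fin.lt_def, Fin.le_def, revDigits_fst, revDigits_snd,
          betaSet_zero]
        rw [← Nat.lt_and_mod_lt_iff_mod_lt_and_div_le]
        have := j.isLt
        have := k.isLt
        constructor <;> rintro ⟨h, hm⟩ <;> exact ⟨by omega, hm⟩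
  rw [this, card_product, Fintype.card_product_filter_lt, Fintype.card_product_filter_le,
    Fintype.card_fin, Fintype.card_fin, Nat.choose_two_right, Nat.choose_two_right,
    Nat.add_sub_cancel, mul_comm (n + 1)]

theorem betaSet_quotPart_zero (q : Fin t) (j : Fin n) :
    betaSet n (fun i => quotPart t (t * n) (fun _ => 0) q i) j = n - 1 - j := by
  have hcore : ∀ q < t, ncount t (t * n) (fun _ => 0) q = n := fun _ => ncount_zero
  have hanti : ∀ j k : Fin (t * n), j ≤ k → (fun _ => 0) k ≤ (fun _ => 0) j :=
    fun _ _ _ => le_rfl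
  rw [betaSet_quotPart hcore hanti]
  refine (strictAnti_betaSet_abacusEquiv_div hcore hanti q).apply_eq_rev (fun k => ?_) j
  have := (abacusEquiv hcore (q, k)).isLt
  rw [Nat.div_lt_iff_lt_mul q.pos, betaSet_zero, mul_comm n t]
  omega

end EmptyPartition

def twistedPoints {R : Type*} [Monoid R] (t : ℕ) {n : ℕ} (ω : R) (x : Fin n → R) :
    Fin (t * n) → R :=
  fun r => ω ^ ((finProdFinEquiv.symm r).1 : ℕ) * x (finProdFinEquiv.symm r).2


section Alternant

variable {R : Type*} [CommRing R] {t n : ℕ} {ω : R}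

theorem det_pow_betaSet_twistedPoints (hω : ω ^ t = 1) {lam : Fin (t * n) → ℕ}
    (hanti : ∀ j k : Fin (t * n), j ≤ k → lam k ≤ lam j)
    (hcore : ∀ q < t, ncount t (t * n) lam q = n) (x : Fin n → R) :
    det (of fun r j => twistedPoints t ω x r ^ betaSet (t * n) lam j) =
      (-1) ^ invCount t (t * n) lam *
        (det (of fun p q : Fin t => ω ^ ((p : ℕ) * q)) ^ n * ∏ q : Fin t, ∏ i, x i ^ (q : ℕ)) *
        ∏ q : Fin t,
          det (of fun i j : Fin n =>
            (x i ^ t) ^ betaSet n (fun k => quotPart t (t * n) lam q k) j) := by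
  set W := of fun p q : Fin t => ω ^ ((p : ℕ) * q)
  set B : Fin t → Matrix (Fin n) (Fin n) R := fun q =>
    of fun i j => x i ^ (q : ℕ) * (x i ^ t) ^ betaSet n (fun k => quotPart t (t * n) lam q k) j
  have hB : ∀ q, det (B q) = (∏ i, x i ^ (q : ℕ)) *
      det (of fun i j : Fin n => (x i ^ t) ^ betaSet n (fun k => quotPart t (t * n) lam q k) j) :=
    fun q => det_mul_column _ _
  calc _ = (-1) ^ invCount t (t * n) lam *
        det (of fun a b : Fin t × Fin n => W a.1 b.1 * B b.1 a.2 b.2) := by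
        rw [det_eq_sign_mul_det_submatrix finProdFinEquiv (abacusEquiv hcore), sign_abacusEquiv]
        push_cast
        congr 2
        ext ⟨p, i⟩ ⟨q, j⟩
        simp only [submatrix_apply, of_apply, twistedPoints, Equiv.symm_apply_apply,
          betaSet_abacusEquiv hcore hanti, W, B]
        exact mul_pow_mul_add_of_pow_eq_one hω _ _ _ _
    _ = _ := by
        rw [det_of_mul_block, Fintype.card_fin]
        simp only [hB, prod_mul_distrib]
        ring

theorem det_pow_rev_twistedPoints (hω : ω ^ t = 1) (x : Fin n → R) :
    det (of fun r j : Fin (t * n) => twistedPoints t ω x r ^ (t * n - 1 - (j : ℕ))) =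
      (-1) ^ (t * (t - 1) / 2 * (n * (n + 1) / 2)) *
        (det (of fun p q : Fin t => ω ^ ((p : ℕ) * q)) ^ n * ∏ q : Fin t, ∏ i, x i ^ (q : ℕ)) *
        det (of fun i j : Fin n => (x i ^ t) ^ (n - 1 - (j : ℕ))) ^ t := by
  have h := det_pow_betaSet_twistedPoints hω (lam := fun _ => 0) (fun _ _ _ => le_rfl)
    (fun _ => ncount_zero) x
  simpa only [betaSet_quotPart_zero, invCount_zero, betaSet_zero, prod_const, card_univ,
    Fintype.card_fin] using h

end Alternant

theorem schur_twisted_factorization_general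
    (t n : ℕ)
    (ω : ℂ) (hω : IsPrimitiveRoot ω t)
    (lam : Fin (t * n) → ℕ)
    (hanti : ∀ j k : Fin (t * n), j ≤ k → lam k ≤ lam j)
    (hcore : ∀ q < t, ncount t (t * n) lam q = n)
    (x : Fin n → ℂ) (hx0 : ∀ i, x i ≠ 0)
    (hxdist : ∀ i j : Fin n, x i ^ t = x j ^ t → i = j) :
    schur (t * n) lam
        (fun r => ω ^ (((finProdFinEquiv.symm r).1 : ℕ)) * x (finProdFinEquiv.symm r).2)
      = (-1 : ℂ) ^ (t * (t - 1) / 2 * (n * (n + 1) / 2))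
        * (-1 : ℂ) ^ invCount t (t * n) lam
        * ∏ q : Fin t,
            schur n (fun j => quotPart t (t * n) lam (q : ℕ) (j : ℕ))
              (fun i => x i ^ t) := by
  change schur (t * n) lam (twistedPoints t ω x) = _
  have hW := hω.det_of_pow_mul_ne_zero
  have hX : ∏ q : Fin t, ∏ i, x i ^ (q : ℕ) ≠ 0 :=
    prod_ne_zero_iff.2 fun _ _ => prod_ne_zero_iff.2 fun i _ => pow_ne_zero _ (hx0 i)
  have hD := det_of_pow_rev_ne_zero (v := fun i => x i ^ t) hxdist
  simp only [schur]
  rw [det_pow_betaSet_twistedPoints hω.pow_eq_one hanti hcore,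
    det_pow_rev_twistedPoints hω.pow_eq_one, prod_div_distrib, prod_const, card_univ,
    Fintype.card_fin]
  generalize t * (t - 1) / 2 * (n * (n + 1) / 2) = s
  rcases neg_one_pow_eq_or ℂ s with h | h <;> rw [h] <;> field_simp

/-- Prasad's factorization: if `n_q(λ, tn) = n` for all `q` (empty `t`-core), then
`s_λ(X, ωX, …, ω^{t-1}X) = (-1)^{(t(t-1)/2)(n(n+1)/2)} sgn(σ_λ) ∏_q s_{λ^{(q)}}(X^t)`. -/
theorem schur_twisted_factorization
    (t n : ℕ) (ht : 2 ≤ t) (hn : 1 ≤ n)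
    (ω : ℂ) (hω : IsPrimitiveRoot ω t)
    (lam : Fin (t * n) → ℕ)
    (hanti : ∀ j k : Fin (t * n), j ≤ k → lam k ≤ lam j)
    (hcore : ∀ q < t, ncount t (t * n) lam q = n)
    (x : Fin n → ℂ) (hx0 : ∀ i, x i ≠ 0)
    (hxdist : ∀ i j : Fin n, x i ^ t = x j ^ t → i = j) :
    schur (t * n) lam
        (fun r => ω ^ (((finProdFinEquiv.symm r).1 : ℕ)) * x (finProdFinEquiv.symm r).2)
      = (-1 : ℂ) ^ (t * (t - 1) / 2 * (n * (n + 1) / 2))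
        * (-1 : ℂ) ^ invCount t (t * n) lam
        * ∏ q : Fin t,
            schur n (fun j => quotPart t (t * n) lam (q : ℕ) (j : ℕ))
              (fun i => x i ^ t) :=
  schur_twisted_factorization_general t n ω hω lam hanti hcore x hx0 hxdist
end

section
/- Let t ≥ 2 and n ≥ 1 be integers, let ω ∈ ℂ be a primitive t-th root of unity, and let λ be a partition of length at most tn+1. Suppose there is no c ∈ {0,…,t−1} such that n_c(λ,tn+1) = n+1 and n_i(λ,tn+1) = n for all i ≠ c (equivalently, the t-core of λ has length greater than 1). Then for every choice of x_1,…,x_n ∈ ℂ, the (tn+1) × (tn+1) matrix whose first tn rows are indexed by pairs (p,i) with 0 ≤ p ≤ t−1, 1 ≤ i ≤ n and have entries (ω^p x_i)^{β_j(λ)} in column j (1 ≤ j ≤ tn+1), and whose last row has every entry equal to 1, has determinant 0. In particular s_λ(X, ωX, …, ω^{t−1}X, 1) = 0. -/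
open BigOperators

/-- The `tn+1` evaluation points `ω^p x_i` (for `0 ≤ p ≤ t-1`, `1 ≤ i ≤ n`)
followed by `1`. -/
noncomputable def evalPtsOne (t n : ℕ) (ω : ℂ) (x : Fin n → ℂ) : Fin (t * n + 1) → ℂ :=
  Fin.snoc
    (fun s : Fin (t * n) =>
      ω ^ (((finProdFinEquiv.symm s).1 : ℕ)) * x (finProdFinEquiv.symm s).2)
    (1 : ℂ)

/-- Auxiliary vector: `(ω^{p r})` at the row indexed by `(p, i)`, `0` at other rows
among the first `tn`, and `0` at the last row. -/
noncomputable def uVec (t n : ℕ) (ω : ℂ) (r : ℕ) (i : Fin n) : Fin (t * n + 1) → ℂ :=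
  Fin.snoc
    (fun s : Fin (t * n) =>
      if (finProdFinEquiv.symm s).2 = i then ω ^ (((finProdFinEquiv.symm s).1 : ℕ) * r) else 0)
    (0 : ℂ)

/-- Auxiliary vector: `1` at the last row, `0` elsewhere. -/
noncomputable def eLast (t n : ℕ) : Fin (t * n + 1) → ℂ :=
  Fin.snoc (0 : Fin (t * n) → ℂ) (1 : ℂ)

/-- Decomposition of a column of the twisted Vandermonde-type matrix. -/
lemma col_decomp (t n : ℕ) (ht : 0 < t) (ω : ℂ) (hωt : ω ^ t = 1)
    (x : Fin n → ℂ) (b : ℕ) :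
    (fun rr : Fin (t * n + 1) => evalPtsOne t n ω x rr ^ b)
      = (∑ i : Fin n, x i ^ b • uVec t n ω (b % t) i) + eLast t n := by
  have key : ∀ p : ℕ, ω ^ (p * b) = ω ^ (p * (b % t)) := by
    intro p
    conv_lhs => rw [← Nat.div_add_mod b t]
    rw [Nat.mul_add, pow_add, show p * (t * (b / t)) = t * (p * (b / t)) by ring,
      pow_mul, hωt, one_pow, one_mul]
  funext rr
  refine Fin.lastCases ?_ ?_ rr
  · simp [evalPtsOne, eLast, uVec, Finset.sum_apply, Pi.smul_apply]
  · intro s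
    simp only [evalPtsOne, uVec, eLast, Fin.snoc_castSucc, Pi.add_apply,
      Finset.sum_apply, Pi.smul_apply, Pi.zero_apply, smul_eq_mul, mul_ite, mul_zero,
      add_zero]
    rw [Finset.sum_ite_eq Finset.univ ((finProdFinEquiv.symm s).2)
      (fun i => x i ^ b * ω ^ (((finProdFinEquiv.symm s).1 : ℕ) * (b % t)))]
    simp only [Finset.mem_univ, if_true]
    rw [mul_pow, ← pow_mul, key]
    ring

/-- If a set of columns of `M`, of cardinality bigger than `F.card`, lies in the span
of the finite set `F`, then `det M = 0`. -/
lemma det_eq_zero_of_cols_in_span {N : ℕ} (M : Matrix (Fin N) (Fin N) ℂ)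
    (F : Finset (Fin N → ℂ)) (S : Finset (Fin N))
    (hmem : ∀ j ∈ S, (fun r => M r j) ∈ Submodule.span ℂ (F : Set (Fin N → ℂ)))
    (hcard : F.card < S.card) : M.det = 0 := by
  rw [← Matrix.exists_mulVec_eq_zero_iff]
  set W := Submodule.span ℂ (F : Set (Fin N → ℂ)) with hW
  have hnotind : ¬ LinearIndependent ℂ
      (fun j : {j // j ∈ S} => (⟨fun r => M r j.1, hmem j.1 j.2⟩ : W)) := by
    intro h
    have h1 : Fintype.card {j // j ∈ S} ≤ Module.finrank ℂ W :=
      h.fintype_card_le_finrank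
    have h2 : Module.finrank ℂ W ≤ F.card := finrank_span_finset_le_card F
    rw [Fintype.card_coe] at h1
    omega
  obtain ⟨g, hsum, j0, hj0⟩ := Fintype.not_linearIndependent_iff.mp hnotind
  classical
  set g' : Fin N → ℂ := fun j => if h : j ∈ S then g ⟨j, h⟩ else 0 with hg'
  have hsumV : ∑ j : {j // j ∈ S}, g j • (fun r => M r j.1) = (0 : Fin N → ℂ) := by
    have := congrArg (W.subtype) hsum
    rw [map_sum, map_zero] at this
    simpa using this
  refine ⟨g', ?_, ?_⟩
  · intro h0
    apply hj0
    have := congrFun h0 j0.1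
    simpa [hg', j0.2] using this
  · funext r
    have hrow : ∑ j : {j // j ∈ S}, g j * M r j.1 = 0 := by
      have := congrFun hsumV r
      simpa [Finset.sum_apply] using this
    have hS : ∑ j ∈ S, g' j * M r j = 0 := by
      rw [← Finset.sum_attach S (fun j => g' j * M r j)]
      rw [← hrow]
      apply Finset.sum_congr rfl
      intro j _
      simp [hg', j.2]
    have : ∑ j : Fin N, M r j * g' j = 0 := by
      rw [← hS]
      rw [← Finset.sum_subset (Finset.subset_univ S)
        (f := fun j => M r j * g' j) (by
          intro j _ hjS
          simp [hg', hjS])]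
      exact Finset.sum_congr rfl fun j _ => mul_comm _ _
    simpa [Matrix.mulVec, dotProduct] using this

/-- The residue counts sum to `m`. -/
lemma ncount_sum (t m : ℕ) (ht : 0 < t) (lam : Fin m → ℕ) :
    ∑ i ∈ Finset.range t, ncount t m lam i = m := by
  classical
  have := Finset.card_eq_sum_card_fiberwise
    (s := (Finset.univ : Finset (Fin m))) (t := Finset.range t)
    (f := fun j => betaSet m lam j % t)
    (fun j _ => Finset.mem_range.mpr (Nat.mod_lt _ ht))
  simpa [ncount, Finset.card_univ] using this.symm

/-- If there is no `c` with `n_c(λ, tn+1) = n+1` and `n_i(λ, tn+1) = n` for `i ≠ c`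
(equivalently, the `t`-core of `λ` has length `> 1`), then the `(tn+1) × (tn+1)` matrix
whose first `tn` rows are `(ω^p x_i)^{β_j(λ)}` and whose last row is all `1`'s has
determinant `0`; in particular `s_λ(X, ωX, …, ω^{t-1}X, 1) = 0`. -/
theorem schur_twisted_one_vanishing
    (t n : ℕ) (ht : 2 ≤ t) (hn : 1 ≤ n)
    (ω : ℂ) (hω : IsPrimitiveRoot ω t)
    (lam : Fin (t * n + 1) → ℕ)
    (hanti : ∀ j k : Fin (t * n + 1), j ≤ k → lam k ≤ lam j)
    (hcore : ¬ ∃ c : Fin t, ncount t (t * n + 1) lam (c : ℕ) = n + 1 ∧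
        ∀ i : Fin t, i ≠ c → ncount t (t * n + 1) lam (i : ℕ) = n)
    (x : Fin n → ℂ) :
    Matrix.det (Matrix.of fun r j : Fin (t * n + 1) =>
        (evalPtsOne t n ω x r) ^ betaSet (t * n + 1) lam j) = 0
    ∧ schur (t * n + 1) lam (evalPtsOne t n ω x) = 0 := by
  classical
  have htpos : 0 < t := by omega
  have hωt : ω ^ t = 1 := hω.pow_eq_one
  set f : ℕ → ℕ := fun i => ncount t (t * n + 1) lam i with hf
  have hsum : ∑ i ∈ Finset.range t, f i = t * n + 1 := ncount_sum t (t * n + 1) htpos lam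
  set M : Matrix (Fin (t * n + 1)) (Fin (t * n + 1)) ℂ :=
    Matrix.of fun r j : Fin (t * n + 1) =>
      (evalPtsOne t n ω x r) ^ betaSet (t * n + 1) lam j with hM
  -- a column with residue `r` lies in the span of `{eLast} ∪ {uVec r i}`
  have colmem : ∀ (r : ℕ) (F : Finset (Fin (t * n + 1) → ℂ)),
      eLast t n ∈ F → (∀ i : Fin n, uVec t n ω r i ∈ F) →
      ∀ j : Fin (t * n + 1), betaSet (t * n + 1) lam j % t = r →
      (fun rr => M rr j) ∈ Submodule.span ℂ (F : Set (Fin (t * n + 1) → ℂ)) := by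
    intro r F hel hu j hj
    have : (fun rr => M rr j)
        = (∑ i : Fin n, x i ^ betaSet (t * n + 1) lam j •
            uVec t n ω (betaSet (t * n + 1) lam j % t) i) + eLast t n :=
      col_decomp t n htpos ω hωt x (betaSet (t * n + 1) lam j)
    rw [this, hj]
    exact Submodule.add_mem _
      (Submodule.sum_mem _ fun i _ =>
        Submodule.smul_mem _ _ (Submodule.subset_span (hu i)))
      (Submodule.subset_span hel)
  -- the key determinant vanishing
  have hdet : M.det = 0 := by
    by_cases hbig : ∃ r ∈ Finset.range t, n + 2 ≤ f r
    · -- one residue class has ≥ n+2 columns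
      obtain ⟨r, _, hr⟩ := hbig
      set F : Finset (Fin (t * n + 1) → ℂ) :=
        insert (eLast t n) (Finset.image (uVec t n ω r) Finset.univ) with hF
      set S : Finset (Fin (t * n + 1)) :=
        Finset.univ.filter (fun j => betaSet (t * n + 1) lam j % t = r) with hS
      refine det_eq_zero_of_cols_in_span M F S ?_ ?_
      · intro j hj
        refine colmem r F ?_ ?_ j ?_
        · exact Finset.mem_insert_self _ _
        · intro i
          exact Finset.mem_insert_of_mem (Finset.mem_image_of_mem _ (Finset.mem_univ i))
        · exact (Finset.mem_filter.mp hj).2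
      · have h1 : F.card ≤ n + 1 := by
          calc F.card ≤ (Finset.image (uVec t n ω r) Finset.univ).card + 1 :=
                Finset.card_insert_le _ _
            _ ≤ Finset.univ.card + 1 := by
                exact Nat.add_le_add_right (Finset.card_image_le) 1
            _ = n + 1 := by simp
        have h2 : S.card = f r := rfl
        omega
    · by_cases htwo : ∃ r ∈ Finset.range t, ∃ s ∈ Finset.range t,
          r ≠ s ∧ n + 1 ≤ f r ∧ n + 1 ≤ f s
      · -- two residue classes each have ≥ n+1 columns
        obtain ⟨r, _, s, _, hrs, hr1, hs1⟩ := htwo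
        set F : Finset (Fin (t * n + 1) → ℂ) :=
          insert (eLast t n)
            (Finset.image (uVec t n ω r) Finset.univ ∪
             Finset.image (uVec t n ω s) Finset.univ) with hF
        set Sr : Finset (Fin (t * n + 1)) :=
          Finset.univ.filter (fun j => betaSet (t * n + 1) lam j % t = r) with hSr
        set Ss : Finset (Fin (t * n + 1)) :=
          Finset.univ.filter (fun j => betaSet (t * n + 1) lam j % t = s) with hSs
        refine det_eq_zero_of_cols_in_span M F (Sr ∪ Ss) ?_ ?_
        · intro j hj
          rcases Finset.mem_union.mp hj with hj | hj
          · refine colmem r F (Finset.mem_insert_self _ _) ?_ j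
              (Finset.mem_filter.mp hj).2
            intro i
            exact Finset.mem_insert_of_mem (Finset.mem_union_left _
              (Finset.mem_image_of_mem _ (Finset.mem_univ i)))
          · refine colmem s F (Finset.mem_insert_self _ _) ?_ j
              (Finset.mem_filter.mp hj).2
            intro i
            exact Finset.mem_insert_of_mem (Finset.mem_union_right _
              (Finset.mem_image_of_mem _ (Finset.mem_univ i)))
        · have h1 : F.card ≤ 2 * n + 1 := by
            calc F.card ≤ (Finset.image (uVec t n ω r) Finset.univ ∪
                Finset.image (uVec t n ω s) Finset.univ).card + 1 :=
                  Finset.card_insert_le _ _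
              _ ≤ ((Finset.image (uVec t n ω r) Finset.univ).card +
                  (Finset.image (uVec t n ω s) Finset.univ).card) + 1 :=
                  Nat.add_le_add_right (Finset.card_union_le _ _) 1
              _ ≤ (Finset.univ.card + Finset.univ.card) + 1 :=
                  Nat.add_le_add_right
                    (Nat.add_le_add (Finset.card_image_le) (Finset.card_image_le)) 1
              _ = 2 * n + 1 := by simp; ring
          have hdisj : Disjoint Sr Ss := by
            rw [Finset.disjoint_left]
            intro j hjr hjs
            exact hrs ((Finset.mem_filter.mp hjr).2.symm.trans (Finset.mem_filter.mp hjs).2)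
          have h2 : (Sr ∪ Ss).card = f r + f s := by
            rw [Finset.card_union_of_disjoint hdisj]; rfl
          omega
      · -- otherwise the t-core condition would hold, contradiction
        exfalso
        push_neg at hbig htwo
        have hle : ∀ i ∈ Finset.range t, f i ≤ n + 1 := fun i hi => by
          have := hbig i hi; omega
        have hex : ∃ c ∈ Finset.range t, f c = n + 1 := by
          by_contra h
          push_neg at h
          have hall : ∀ i ∈ Finset.range t, f i ≤ n := fun i hi => by
            have h1 := hle i hi; have h2 := h i hi; omega
          have : ∑ i ∈ Finset.range t, f i ≤ ∑ _i ∈ Finset.range t, n :=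
            Finset.sum_le_sum hall
          rw [Finset.sum_const, Finset.card_range, smul_eq_mul] at this
          omega
        obtain ⟨c, hct, hc⟩ := hex
        have hlen : ∀ i ∈ Finset.range t, i ≠ c → f i ≤ n := by
          intro i hit hic
          have h1 := hle i hit
          have h2 := htwo c hct i hit (fun h => hic h.symm)
          omega
        have hrest : ∀ i ∈ Finset.range t, i ≠ c → f i = n := by
          by_contra h
          push_neg at h
          obtain ⟨i0, hi0t, hi0c, hi0⟩ := h
          have hstrict : ∑ i ∈ Finset.range t, f i <
              ∑ i ∈ Finset.range t, (if i = c then n + 1 else n) := by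
            refine Finset.sum_lt_sum ?_ ⟨i0, hi0t, ?_⟩
            · intro i hi
              by_cases hic : i = c
              · subst hic; simp [hc]
              · simp only [hic, if_false]
                exact hlen i hi hic
            · have := hlen i0 hi0t hi0c
              simp only [hi0c, if_false]
              omega
          have hrhs : ∑ i ∈ Finset.range t, (if i = c then n + 1 else n)
              = t * n + 1 := by
            have : ∀ i, (if i = c then n + 1 else n) = n + (if i = c then 1 else 0) := by
              intro i; by_cases h : i = c <;> simp [h]
            simp only [this, Finset.sum_add_distrib, Finset.sum_const,
              Finset.card_range, smul_eq_mul, mul_one, Finset.sum_ite_eq', hct,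
              if_true]
          omega
        apply hcore
        have hclt : c < t := Finset.mem_range.mp hct
        refine ⟨⟨c, hclt⟩, by simpa using hc, ?_⟩
        intro i hi
        have hvne : (i : ℕ) ≠ c := by
          intro h
          apply hi
          apply Fin.ext
          simpa using h
        exact hrest (i : ℕ) (Finset.mem_range.mpr i.isLt) hvne
  refine ⟨hdet, ?_⟩
  unfold schur
  rw [show (Matrix.of fun i j : Fin (t * n + 1) =>
      evalPtsOne t n ω x i ^ betaSet (t * n + 1) lam j) = M from rfl, hdet, zero_div]
end

section
/- Let t ≥ 2 and n ≥ 1 be integers, let ω ∈ ℂ be a primitive t-th root of unity, and let λ be a partition of length at most tn. Suppose it is NOT the case that both n_{t−1}(λ,tn) = n and n_i(λ,tn) + n_{t−2−i}(λ,tn) = 2n for all 0 ≤ i ≤ ⌊(t−2)/2⌋ (equivalently, the t-core of λ is not a symplectic t-core). Then for every choice of nonzero x_1,…,x_n ∈ ℂ, the tn × tn matrix M, whose rows are indexed by pairs (p,i) with 0 ≤ p ≤ t−1, 1 ≤ i ≤ n, whose columns are indexed by 1 ≤ j ≤ tn, and whose entries are M_{(p,i),j} = (ω^p x_i)^{β_j(λ)+1}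 − (ω^p x_i)^{−β_j(λ)−1}, has determinant 0. In particular the symplectic character sp_λ evaluated at the tn numbers ω^p x_i vanishes. -/
open BigOperators

/-- The symplectic character of `mu` evaluated at nonzero complex numbers `y`. -/
noncomputable def spChar (N : ℕ) (mu : Fin N → ℕ) (y : Fin N → ℂ) : ℂ :=
  Matrix.det (Matrix.of fun i j : Fin N =>
      y i ^ ((betaSet N mu j : ℤ) + 1) - y i ^ (-(betaSet N mu j : ℤ) - 1)) /
    Matrix.det (Matrix.of fun i j : Fin N =>
      y i ^ (((N - 1 - (j : ℕ) : ℕ) : ℤ) + 1) - y i ^ (-((N - 1 - (j : ℕ) : ℕ) : ℤ) - 1))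


/-!
Write `y = ω^p x_i` for the row `(p, i)`. Since `ω^t = 1`, the column of `β` is
`(y^{β+1} - y^{-β-1})_{(p,i)} = Σ_i x_i^{β+1} e_{c,i} - Σ_i x_i^{-β-1} e_{-c,i}` with
`c ≡ β + 1 (mod t)` and `e_{c,i}(p, i') = δ_{i i'} ω^{pc}`. Hence, if the determinant is nonzero,
the columns with `β + 1 ≡ ±c` are independent vectors in a space of dimension at most
`n · #{c, -c}`, so `N(c) + N(-c) ≤ 2n` for the number `N(c)` of `β_j` with `β_j + 1 ≡ c`.
As `Σ_c N(c) = tn`, all these inequalities are equalities, and reading them at `c = 0` and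
`c = i + 1` gives exactly the symplectic `t`-core conditions.
-/

open Finset Module Submodule

theorem zpow_eq_zpow_of_intCast_eq {K : Type*} [GroupWithZero K] {t : ℕ} [NeZero t] {ω : K}
    (hω : ω ^ t = 1) {a b : ℤ} (h : (a : ZMod t) = b) : ω ^ a = ω ^ b := by
  have hω0 : ω ≠ 0 := by
    rintro rfl
    simp [NeZero.ne t] at hω
  obtain ⟨k, hk⟩ := (ZMod.intCast_eq_intCast_iff_dvd_sub a b t).1 h
  rw [show b = a + t * k by omega, zpow_add₀ hω0, zpow_mul, zpow_natCast, hω, one_zpow, mul_one]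

theorem LinearIndependent.card_le_finrank_of_forall_mem {K V ι : Type*} [Field K]
    [AddCommGroup V] [Module K V] [FiniteDimensional K V] {v : ι → V}
    (hv : LinearIndependent K v) (s : Finset ι) (W : Submodule K V) (hs : ∀ j ∈ s, v j ∈ W) :
    #s ≤ finrank K W := by
  have hvs := linearIndependent_iff_card_eq_finrank_span.1
    (hv.comp ((↑) : s → ι) Subtype.val_injective)
  rw [← Fintype.card_coe, hvs]
  exact Submodule.finrank_mono (span_le.2 (Set.range_subset_iff.2 fun j => hs j j.2))

theorem apply_add_apply_neg_eq_of_sum_eq {G : Type*} [AddGroup G] [Fintype G] (N : G → ℕ)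
    {m : ℕ} (hsum : ∑ c, N c = Fintype.card G * m) (hle : ∀ c, N c + N (-c) ≤ 2 * m) (c : G) :
    N c + N (-c) = 2 * m := by
  have htot : ∑ c, (N c + N (-c)) = ∑ _c : G, 2 * m := by
    rw [sum_add_distrib, show ∑ c, N (-c) = ∑ c, N c from Equiv.sum_comp (Equiv.neg G) N, hsum,
      sum_const, card_univ, smul_eq_mul]
    ring
  exact (sum_eq_sum_iff_of_le fun c _ => hle c).1 htot c (mem_univ c)

section TwistedColumns

variable {K ι κ J : Type*} [Field K] [DecidableEq κ] (t : ℕ) (ω : K)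
  (p : ι → ℕ) (q : ι → κ)

def twistVec (c : ZMod t) (i : κ) : ι → K :=
  fun r => if q r = i then ω ^ (p r * c.val) else 0

def twistSpan (C : Finset (ZMod t)) : Submodule K (ι → K) :=
  span K (Set.range fun ci : C × κ => twistVec t ω p q ci.1 ci.2)

variable [Fintype κ]

theorem finrank_twistSpan_le (C : Finset (ZMod t)) :
    finrank K (twistSpan t ω p q C) ≤ #C * Fintype.card κ :=
  (finrank_range_le_card _).trans (by simp)

variable {t ω p q} [NeZero t]

theorem twisted_zpow_eq_sum (hω : ω ^ t = 1) (x : κ → K) (m : ℤ) :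
    (fun r => (ω ^ p r * x (q r)) ^ m) = ∑ i, x i ^ m • twistVec t ω p q (m : ZMod t) i := by
  funext r
  have hroot : (ω ^ p r) ^ m = ω ^ (p r * (m : ZMod t).val) := by
    rw [← zpow_natCast, ← zpow_mul, ← zpow_natCast]
    exact zpow_eq_zpow_of_intCast_eq hω (by push_cast; rw [ZMod.natCast_zmod_val])
  simp [twistVec, Finset.sum_apply, mul_zpow, hroot, mul_comm]

theorem twisted_zpow_mem_twistSpan (hω : ω ^ t = 1) (x : κ → K) {m : ℤ}
    {C : Finset (ZMod t)} (hm : (m : ZMod t) ∈ C) :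
    (fun r => (ω ^ p r * x (q r)) ^ m) ∈ twistSpan t ω p q C := by
  rw [twisted_zpow_eq_sum hω]
  exact sum_mem fun i _ => smul_mem _ _ (subset_span ⟨(⟨_, hm⟩, i), rfl⟩)

variable [Fintype ι] [Fintype J]

theorem card_residue_mem_le (hω : ω ^ t = 1) (x : κ → K) (m : J → ℤ)
    (hli : LinearIndependent K fun j r => (ω ^ p r * x (q r)) ^ m j - (ω ^ p r * x (q r)) ^ (-m j))
    (C : Finset (ZMod t)) (hC : ∀ c ∈ C, -c ∈ C) :
    #{j | (m j : ZMod t) ∈ C} ≤ #C * Fintype.card κ := by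
  refine (hli.card_le_finrank_of_forall_mem _ (twistSpan t ω p q C) fun j hj => ?_).trans
    (finrank_twistSpan_le t ω p q C)
  have hj := (mem_filter.1 hj).2
  exact sub_mem (twisted_zpow_mem_twistSpan hω x hj)
    (twisted_zpow_mem_twistSpan hω x (by push_cast; exact hC _ hj))

theorem card_residue_add_card_residue_neg_le (hω : ω ^ t = 1) (x : κ → K) (m : J → ℤ)
    (hli : LinearIndependent K fun j r => (ω ^ p r * x (q r)) ^ m j - (ω ^ p r * x (q r)) ^ (-m j))
    (c : ZMod t) :
    #{j | (m j : ZMod t) = c} + #{j | (m j : ZMod t) = -c} ≤ 2 * Fintype.card κ := by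
  classical
  by_cases hc : -c = c
  · have h := card_residue_mem_le hω x m hli {c} (by simp [hc])
    simp only [mem_singleton, card_singleton, one_mul] at h
    rw [hc]
    omega
  · have h := card_residue_mem_le hω x m hli {c, -c} (by simp [or_comm])
    simp only [mem_insert, mem_singleton] at h
    rwa [filter_or, card_union_of_disjoint, card_pair (Ne.symm hc)] at h
    exact disjoint_filter.2 fun j _ h1 h2 => hc (h1 ▸ h2).symm

end TwistedColumns

def betaResidueCount (t m : ℕ) (lam : Fin m → ℕ) (c : ZMod t) : ℕ :=
  #{j | (((betaSet m lam j : ℤ) + 1 : ℤ) : ZMod t) = c}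

theorem ncount_eq_betaResidueCount {t m : ℕ} (lam : Fin m → ℕ) {i : ℕ} (hi : i < t) :
    ncount t m lam i = betaResidueCount t m lam (i + 1) := by
  refine congrArg card (filter_congr fun j _ => ?_)
  push_cast
  rw [add_left_inj, ZMod.natCast_eq_natCast_iff', Nat.mod_eq_of_lt hi]

theorem ncount_symplectic_of_balanced {t m n : ℕ} (ht : 0 < t) (lam : Fin m → ℕ)
    (h : ∀ c, betaResidueCount t m lam c + betaResidueCount t m lam (-c) = 2 * n) :
    ncount t m lam (t - 1) = n ∧
      ∀ i < t / 2, ncount t m lam i + ncount t m lam (t - 2 - i) = 2 * n := by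
  refine ⟨?_, fun i hi => ?_⟩
  · have h0 := h 0
    rw [neg_zero] at h0
    have hzero : ((t - 1 : ℕ) : ZMod t) + 1 = 0 := by
      rw [← Nat.cast_add_one, Nat.sub_add_cancel ht, ZMod.natCast_self]
    rw [ncount_eq_betaResidueCount lam (by omega), hzero]
    omega
  · have hneg : ((t - 2 - i : ℕ) : ZMod t) + 1 = -((i : ZMod t) + 1) := by
      refine eq_neg_of_add_eq_zero_left ?_
      have hsum : t - 2 - i + 1 + (i + 1) = t := by omega
      exact_mod_cast (show ((t - 2 - i + 1 + (i + 1) : ℕ) : ZMod t) = 0 by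
        rw [hsum, ZMod.natCast_self])
    rw [ncount_eq_betaResidueCount lam (by omega), ncount_eq_betaResidueCount lam (by omega),
      hneg]
    exact h _

theorem spChar_eq_zero_of_det_eq_zero {N : ℕ} {mu : Fin N → ℕ} {y : Fin N → ℂ}
    (h : Matrix.det (Matrix.of fun i j : Fin N =>
      y i ^ ((betaSet N mu j : ℤ) + 1) - y i ^ (-(betaSet N mu j : ℤ) - 1)) = 0) :
    spChar N mu y = 0 := by
  rw [spChar, h, zero_div]

theorem symplectic_twisted_vanishing_general
    (t n : ℕ) (ht : 2 ≤ t)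
    (ω : ℂ) (hω : IsPrimitiveRoot ω t)
    (lam : Fin (t * n) → ℕ)
    (hcore : ¬ (ncount t (t * n) lam (t - 1) = n ∧
        ∀ i < t / 2, ncount t (t * n) lam i + ncount t (t * n) lam (t - 2 - i) = 2 * n))
    (x : Fin n → ℂ) :
    Matrix.det (Matrix.of fun r j : Fin (t * n) =>
        (ω ^ (((finProdFinEquiv.symm r).1 : ℕ)) * x (finProdFinEquiv.symm r).2)
            ^ ((betaSet (t * n) lam j : ℤ) + 1)
          - (ω ^ (((finProdFinEquiv.symm r).1 : ℕ)) * x (finProdFinEquiv.symm r).2)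
            ^ (-(betaSet (t * n) lam j : ℤ) - 1)) = 0
    ∧ spChar (t * n) lam
        (fun r => ω ^ (((finProdFinEquiv.symm r).1 : ℕ)) * x (finProdFinEquiv.symm r).2)
      = 0 := by
  have : NeZero t := ⟨by omega⟩
  refine (fun hdet => ⟨hdet, spChar_eq_zero_of_det_eq_zero hdet⟩) ?_
  by_contra hdet
  have hli := Matrix.linearIndependent_cols_of_det_ne_zero hdet
  simp only [Matrix.col, ← neg_add'] at hli
  refine hcore (ncount_symplectic_of_balanced (by omega) lam fun c => ?_)
  conv_rhs => rw [← Fintype.card_fin n]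
  refine apply_add_apply_neg_eq_of_sum_eq _ ?_
    (card_residue_add_card_residue_neg_le hω.pow_eq_one x _ hli) c
  rw [← card_eq_sum_card_fiberwise fun j _ => mem_coe.2 (mem_univ _), card_univ,
    Fintype.card_fin, Fintype.card_fin, ZMod.card]

/-- If the `t`-core of `λ` is not a symplectic `t`-core, i.e. it is not the case that
`n_{t-1}(λ,tn) = n` and `n_i + n_{t-2-i} = 2n` for all `0 ≤ i ≤ ⌊(t-2)/2⌋`, then the
`tn × tn` matrix with entries `(ω^p x_i)^{β_j(λ)+1} - (ω^p x_i)^{-β_j(λ)-1}` has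
determinant `0`; in particular `sp_λ(X, ωX, …, ω^{t-1}X) = 0`. -/
theorem symplectic_twisted_vanishing
    (t n : ℕ) (ht : 2 ≤ t) (hn : 1 ≤ n)
    (ω : ℂ) (hω : IsPrimitiveRoot ω t)
    (lam : Fin (t * n) → ℕ)
    (hanti : ∀ j k : Fin (t * n), j ≤ k → lam k ≤ lam j)
    (hcore : ¬ (ncount t (t * n) lam (t - 1) = n ∧
        ∀ i < t / 2, ncount t (t * n) lam i + ncount t (t * n) lam (t - 2 - i) = 2 * n))
    (x : Fin n → ℂ) (hx0 : ∀ i, x i ≠ 0) :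
    Matrix.det (Matrix.of fun r j : Fin (t * n) =>
        (ω ^ (((finProdFinEquiv.symm r).1 : ℕ)) * x (finProdFinEquiv.symm r).2)
            ^ ((betaSet (t * n) lam j : ℤ) + 1)
          - (ω ^ (((finProdFinEquiv.symm r).1 : ℕ)) * x (finProdFinEquiv.symm r).2)
            ^ (-(betaSet (t * n) lam j : ℤ) - 1)) = 0
    ∧ spChar (t * n) lam
        (fun r => ω ^ (((finProdFinEquiv.symm r).1 : ℕ)) * x (finProdFinEquiv.symm r).2)
      = 0 :=
  symplectic_twisted_vanishing_general t n ht ω hω lam hcore x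
end

section
/- Let t ≥ 2 and n ≥ 1 be integers, let ω ∈ ℂ be a primitive t-th root of unity, and let λ be a partition of length at most tn. Suppose n_i(λ,tn) + n_{t−1−i}(λ,tn) ≠ 2n for some 0 ≤ i ≤ ⌊(t−1)/2⌋ (equivalently, the t-core of λ is not self-conjugate). Then for every choice of nonzero x_1,…,x_n ∈ ℂ, the tn × tn matrix M, whose rows are indexed by pairs (p,i) with 0 ≤ p ≤ t−1, 1 ≤ i ≤ n, whose columns are indexed by 1 ≤ j ≤ tn, and whose entries are M_{(p,i),j} = (ω^p x_i)^{β_j(λ)+1} − (ω^p x_i)^{−β_j(λ)}, has determinant 0. In particular the odd orthogonal character oo_λ evaluated at the tn numbers ω^p x_i vanishes. -/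
open BigOperators
open Matrix

/-- The odd orthogonal character of `mu` evaluated at nonzero complex numbers `y`. -/
noncomputable def ooChar (N : ℕ) (mu : Fin N → ℕ) (y : Fin N → ℂ) : ℂ :=
  Matrix.det (Matrix.of fun i j : Fin N =>
      y i ^ ((betaSet N mu j : ℤ) + 1) - y i ^ (-(betaSet N mu j : ℤ))) /
    Matrix.det (Matrix.of fun i j : Fin N =>
      y i ^ (((N - 1 - (j : ℕ) : ℕ) : ℤ) + 1) - y i ^ (-((N - 1 - (j : ℕ) : ℕ) : ℤ)))


open Submodule Set Module in
lemma aux_card_le {K V ι κ : Type*} [Field K] [AddCommGroup V] [Module K V]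
    [Fintype ι] [Fintype κ] {v : ι → V} {u : κ → V} (hv : LinearIndependent K v)
    (h : ∀ i, v i ∈ Submodule.span K (Set.range u)) :
    Fintype.card ι ≤ Fintype.card κ := by
  have hfd : FiniteDimensional K (span K (Set.range u)) :=
    FiniteDimensional.span_of_finite K (Set.finite_range u)
  have hw : LinearIndependent K (fun i => (⟨v i, h i⟩ : span K (Set.range u))) := by
    apply LinearIndependent.of_comp (span K (Set.range u)).subtype
    exact hv
  calc Fintype.card ι ≤ finrank K (span K (Set.range u)) := hw.fintype_card_le_finrank
    _ ≤ Fintype.card κ := finrank_range_le_card u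

/-- If the `t`-core of `λ` is not self-conjugate, i.e. `n_i + n_{t-1-i} ≠ 2n` for some
`0 ≤ i ≤ ⌊(t-1)/2⌋`, then the `tn × tn` matrix with entries
`(ω^p x_i)^{β_j(λ)+1} - (ω^p x_i)^{-β_j(λ)}` has determinant `0`; in particular
`oo_λ(X, ωX, …, ω^{t-1}X) = 0`. -/
theorem odd_orthogonal_twisted_vanishing
    (t n : ℕ) (ht : 2 ≤ t) (hn : 1 ≤ n)
    (ω : ℂ) (hω : IsPrimitiveRoot ω t)
    (lam : Fin (t * n) → ℕ)
    (hanti : ∀ j k : Fin (t * n), j ≤ k → lam k ≤ lam j)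
    (hcore : ∃ i < (t + 1) / 2,
        ncount t (t * n) lam i + ncount t (t * n) lam (t - 1 - i) ≠ 2 * n)
    (x : Fin n → ℂ) (hx0 : ∀ i, x i ≠ 0) :
    Matrix.det (Matrix.of fun r j : Fin (t * n) =>
        (ω ^ (((finProdFinEquiv.symm r).1 : ℕ)) * x (finProdFinEquiv.symm r).2)
            ^ ((betaSet (t * n) lam j : ℤ) + 1)
          - (ω ^ (((finProdFinEquiv.symm r).1 : ℕ)) * x (finProdFinEquiv.symm r).2)
            ^ (-(betaSet (t * n) lam j : ℤ))) = 0
    ∧ ooChar (t * n) lam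
        (fun r => ω ^ (((finProdFinEquiv.symm r).1 : ℕ)) * x (finProdFinEquiv.symm r).2)
      = 0 := by
  classical
  have htpos : 0 < t := by omega
  have hωt : ω ^ t = 1 := hω.pow_eq_one
  have hmod : ∀ a : ℕ, ω ^ a = ω ^ (a % t) := by
    intro a
    conv_lhs => rw [← Nat.div_add_mod a t]
    rw [pow_add, pow_mul, hωt, one_pow, one_mul]
  have hcong : ∀ a c : ℕ, a ≡ c [MOD t] → ω ^ a = ω ^ c := by
    intro a c h; rw [hmod a, hmod c, h]
  have key : ∀ y : Fin (t * n) → ℂ,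
      y = (fun r => ω ^ (((finProdFinEquiv.symm r).1 : ℕ)) * x (finProdFinEquiv.symm r).2) →
      Matrix.det (Matrix.of fun r j : Fin (t * n) =>
        y r ^ ((betaSet (t * n) lam j : ℤ) + 1)
          - y r ^ (-(betaSet (t * n) lam j : ℤ))) = 0 := by
    intro y hy
    by_contra hdet
    set M : Matrix (Fin (t * n)) (Fin (t * n)) ℂ := Matrix.of fun r j =>
        y r ^ ((betaSet (t * n) lam j : ℤ) + 1)
          - y r ^ (-(betaSet (t * n) lam j : ℤ)) with hMdef
    have hunit : IsUnit M := (Matrix.isUnit_iff_isUnit_det M).2 (Ne.isUnit hdet)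
    have hli : LinearIndependent ℂ (fun j => Mᵀ j) :=
      Matrix.linearIndependent_cols_iff_isUnit.2 hunit
    -- column decomposition
    have hcol : ∀ (j : Fin (t * n)) (a : ℕ), a < t → betaSet (t * n) lam j % t = a →
        Mᵀ j = (∑ k : Fin n, (x k ^ ((betaSet (t * n) lam j : ℤ) + 1)) •
            (fun r : Fin (t * n) => if (finProdFinEquiv.symm r).2 = k then
              ω ^ (((finProdFinEquiv.symm r).1 : ℕ) * (a + 1)) else 0))
          + (∑ k : Fin n, (-(x k ^ (-(betaSet (t * n) lam j : ℤ)))) •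
            (fun r : Fin (t * n) => if (finProdFinEquiv.symm r).2 = k then
              ω ^ (((finProdFinEquiv.symm r).1 : ℕ) * (t - a)) else 0)) := by
      intro j a ha hj
      funext r
      have hbmod : betaSet (t * n) lam j ≡ a [MOD t] := by
        unfold Nat.ModEq; rw [hj, Nat.mod_eq_of_lt ha]
      set b := betaSet (t * n) lam j with hb
      set p : ℕ := ((finProdFinEquiv.symm r).1 : ℕ) with hp
      set q := (finProdFinEquiv.symm r).2 with hq
      have h1 : (ω ^ p * x q) ^ ((b : ℤ) + 1) = x q ^ ((b : ℤ) + 1) * ω ^ (p * (a + 1)) := by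
        have e : ((b : ℤ) + 1) = ((b + 1 : ℕ) : ℤ) := by push_cast; ring
        rw [e, zpow_natCast, zpow_natCast, mul_pow, ← pow_mul,
          hcong (p * (b + 1)) (p * (a + 1)) (Nat.ModEq.mul_left p (hbmod.add_right 1))]
        ring
      have h2 : (ω ^ p * x q) ^ (-(b : ℤ)) = x q ^ (-(b : ℤ)) * ω ^ (p * (t - a)) := by
        rw [mul_zpow]
        have hinv : (ω ^ p) ^ (-(b : ℤ)) = ω ^ (p * (t - a)) := by
          rw [_root_.zpow_neg, zpow_natCast, ← pow_mul]
          apply inv_eq_of_mul_eq_one_right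
          rw [← pow_add, ← mul_add]
          have hz : (b + (t - a)) ≡ 0 [MOD t] := by
            calc b + (t - a) ≡ a + (t - a) [MOD t] := hbmod.add_right _
            _ = t := by omega
            _ ≡ 0 [MOD t] := Nat.modEq_zero_iff_dvd.2 dvd_rfl
          rw [hcong (p * (b + (t - a))) 0 (by simpa using hz.mul_left p), pow_zero]
        rw [hinv]; ring
      have hMr : Mᵀ j r = (ω ^ p * x q) ^ ((b : ℤ) + 1) - (ω ^ p * x q) ^ (-(b : ℤ)) := by
        show M r j = _
        rw [hMdef]
        simp only [Matrix.of_apply]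
        rw [hy]
      rw [hMr, h1, h2]
      simp only [Pi.add_apply, Finset.sum_apply, Pi.smul_apply, smul_eq_mul, mul_ite, mul_zero]
      rw [Finset.sum_ite_eq, Finset.sum_ite_eq]
      simp only [Finset.mem_univ, if_true]
      ring
    -- per-class bound
    have bound : ∀ i, i < t →
        ncount t (t * n) lam i + ncount t (t * n) lam (t - 1 - i) ≤ 2 * n := by
      intro i hi
      set w : ℕ → Fin n → (Fin (t * n) → ℂ) := fun e k r =>
        if (finProdFinEquiv.symm r).2 = k then
          ω ^ (((finProdFinEquiv.symm r).1 : ℕ) * e) else 0 with hwdef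
      set s : Finset (Fin (t * n)) := Finset.univ.filter
        (fun j => betaSet (t * n) lam j % t = i ∨ betaSet (t * n) lam j % t = t - 1 - i)
        with hsdef
      by_cases hmid : t - 1 - i = i
      · have hti : t - i = i + 1 := by omega
        have hmem : ∀ j : Fin (t * n), j ∈ s →
            Mᵀ j ∈ Submodule.span ℂ (Set.range (w (i + 1))) := by
          intro j hj
          rw [hsdef, Finset.mem_filter, hmid, or_self] at hj
          rw [hcol j i hi hj.2, hti]
          refine Submodule.add_mem _
            (Submodule.sum_mem _ fun k _ => Submodule.smul_mem _ _
              (Submodule.subset_span ⟨k, rfl⟩))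
            (Submodule.sum_mem _ fun k _ => Submodule.smul_mem _ _
              (Submodule.subset_span ⟨k, rfl⟩))
        have hle := aux_card_le (v := fun j : {j // j ∈ s} => Mᵀ (j : Fin (t * n)))
          (u := w (i + 1)) (hli.comp _ Subtype.val_injective) (fun j => hmem j j.2)
        have hcards : s.card = ncount t (t * n) lam i := by
          rw [hsdef, ncount]
          congr 1
          ext j
          simp [hmid]
        have hcardn : Fintype.card {j // j ∈ s} = s.card := Fintype.card_coe s
        rw [hcardn, Fintype.card_fin] at hle
        rw [hmid]
        omega
      · have hmem : ∀ j : Fin (t * n), j ∈ s →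
            Mᵀ j ∈ Submodule.span ℂ (Set.range (Sum.elim (w (i + 1)) (w (t - i)))) := by
          intro j hj
          rw [hsdef, Finset.mem_filter] at hj
          rw [Set.Sum.elim_range]
          rcases hj.2 with hj2 | hj2
          · rw [hcol j i hi hj2]
            refine Submodule.add_mem _
              (Submodule.sum_mem _ fun k _ => Submodule.smul_mem _ _
                (Submodule.subset_span (Or.inl ⟨k, rfl⟩)))
              (Submodule.sum_mem _ fun k _ => Submodule.smul_mem _ _
                (Submodule.subset_span (Or.inr ⟨k, rfl⟩)))
          · have ha : t - 1 - i < t := by omega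
            have e1 : t - 1 - i + 1 = t - i := by omega
            have e2 : t - (t - 1 - i) = i + 1 := by omega
            rw [hcol j (t - 1 - i) ha hj2, e1, e2]
            refine Submodule.add_mem _
              (Submodule.sum_mem _ fun k _ => Submodule.smul_mem _ _
                (Submodule.subset_span (Or.inr ⟨k, rfl⟩)))
              (Submodule.sum_mem _ fun k _ => Submodule.smul_mem _ _
                (Submodule.subset_span (Or.inl ⟨k, rfl⟩)))
        have hle := aux_card_le (v := fun j : {j // j ∈ s} => Mᵀ (j : Fin (t * n)))
          (u := Sum.elim (w (i + 1)) (w (t - i)))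
          (hli.comp _ Subtype.val_injective) (fun j => hmem j j.2)
        have hcardn : Fintype.card {j // j ∈ s} = s.card := Fintype.card_coe s
        rw [hcardn, Fintype.card_sum, Fintype.card_fin] at hle
        have hcards : s.card = ncount t (t * n) lam i + ncount t (t * n) lam (t - 1 - i) := by
          rw [hsdef, ncount, ncount, Finset.filter_or]
          rw [Finset.card_union_of_disjoint]
          rw [Finset.disjoint_left]
          intro j hj1 hj2
          rw [Finset.mem_filter] at hj1 hj2
          exact hmid (hj2.2.symm.trans hj1.2)
        omega
    -- counting
    have htot : ∑ i ∈ Finset.range t, ncount t (t * n) lam i = t * n := by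
      have h := Finset.card_eq_sum_card_fiberwise
        (s := (Finset.univ : Finset (Fin (t * n)))) (t := Finset.range t)
        (f := fun j => betaSet (t * n) lam j % t)
        (fun j _ => Finset.mem_range.2 (Nat.mod_lt _ htpos))
      simpa [ncount] using h.symm
    have hrev : ∑ i ∈ Finset.range t, ncount t (t * n) lam (t - 1 - i)
        = ∑ i ∈ Finset.range t, ncount t (t * n) lam i :=
      Finset.sum_range_reflect _ t
    have hsumeq : ∑ i ∈ Finset.range t,
        (ncount t (t * n) lam i + ncount t (t * n) lam (t - 1 - i))
        = ∑ i ∈ Finset.range t, 2 * n := by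
      rw [Finset.sum_add_distrib, htot, hrev, htot, Finset.sum_const, Finset.card_range,
        smul_eq_mul]
      ring
    obtain ⟨i0, hi0, hne⟩ := hcore
    have hi0t : i0 < t := by omega
    exact hne ((Finset.sum_eq_sum_iff_of_le (fun i hi =>
      bound i (Finset.mem_range.1 hi))).1 hsumeq i0 (Finset.mem_range.2 hi0t))
  refine ⟨key _ rfl, ?_⟩
  unfold ooChar
  rw [key _ rfl]
  exact zero_div _
end

section
/- Let λ be a partition of length at most m₁ and μ a partition of length at most m₂, and assume m₂ ≥ λ_1. Then μ is the conjugate partition of λ if and only if the m₁ + m₂ numbers β_j(λ,m₁) for 1 ≤ j ≤ m₁ together with m₁ + m₂ − 1 − β_k(μ,m₂) for 1 ≤ k ≤ m₂ form a permutation of {0, 1, …, m₁ + m₂ − 1}. -/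
open BigOperators

lemma betaSet_cast {m : ℕ} (f : Fin m → ℕ) (j : Fin m) :
    ((betaSet m f j : ℕ) : ℤ) = (f j : ℤ) + m - 1 - j := by
  have := j.isLt
  unfold betaSet
  omega

/-- From the exists-unique condition, extract injectivity and range bounds. -/
lemma inj_of_exists_unique {α : Type*} [Fintype α] (N : ℕ) (hcard : Fintype.card α = N)
    (f : α → ℤ) (H : ∀ v : ℤ, 0 ≤ v → v < N → ∃! s, f s = v) :
    Function.Injective f ∧ ∀ s, 0 ≤ f s ∧ f s < N := by
  have hv : ∀ v : Fin N, (0 : ℤ) ≤ ((v : ℕ) : ℤ) ∧ ((v : ℕ) : ℤ) < N := by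
    intro v
    have := v.isLt
    exact ⟨by positivity, by exact_mod_cast this⟩
  let g : Fin N → α := fun v => (H v (hv v).1 (hv v).2).choose
  have hg : ∀ v : Fin N, f (g v) = ((v : ℕ) : ℤ) := fun v =>
    (H v (hv v).1 (hv v).2).choose_spec.1
  have hginj : Function.Injective g := by
    intro a b hab
    have h1 : ((a : ℕ) : ℤ) = ((b : ℕ) : ℤ) := by rw [← hg a, ← hg b, hab]
    have h2 : (a : ℕ) = (b : ℕ) := by exact_mod_cast h1
    exact Fin.ext h2
  have hgsurj : Function.Surjective g := by
    have : Function.Bijective g :=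
      (Fintype.bijective_iff_injective_and_card g).2 ⟨hginj, by simp [hcard]⟩
    exact this.2
  have hrange : ∀ s, 0 ≤ f s ∧ f s < N := by
    intro s
    obtain ⟨v, hvs⟩ := hgsurj s
    have : f s = ((v : ℕ) : ℤ) := by rw [← hvs, hg]
    rw [this]
    exact hv v
  refine ⟨?_, hrange⟩
  intro s t hst
  have h1 := hrange s
  obtain ⟨w, hw, huniq⟩ := H (f s) h1.1 h1.2
  exact (huniq s rfl).trans (huniq t hst.symm).symm

/-- From injectivity and range bounds, derive the exists-unique condition. -/
lemma exists_unique_of_inj {α : Type*} [Fintype α] (N : ℕ) (hcard : Fintype.card α = N)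
    (f : α → ℤ) (hinj : Function.Injective f)
    (hrange : ∀ s, 0 ≤ f s ∧ f s < N) :
    ∀ v : ℤ, 0 ≤ v → v < N → ∃! s, f s = v := by
  have hN : ∀ s, (f s).toNat < N := fun s => by have := hrange s; omega
  let g : α → Fin N := fun s => ⟨(f s).toNat, hN s⟩
  have hginj : Function.Injective g := by
    intro a b hab
    apply hinj
    have h1 := hrange a
    have h2 := hrange b
    have h3 : (f a).toNat = (f b).toNat := congrArg Fin.val hab
    omega
  have hgsurj : Function.Surjective g := by
    have : Function.Bijective g :=
      (Fintype.bijective_iff_injective_and_card g).2 ⟨hginj, by simp [hcard]⟩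
    exact this.2
  intro v hv0 hvN
  obtain ⟨s, hs⟩ := hgsurj ⟨v.toNat, by omega⟩
  have hfs : f s = v := by
    have h3 : (f s).toNat = v.toNat := congrArg Fin.val hs
    have := hrange s
    omega
  exact ⟨s, hfs, fun t ht => hinj (ht.trans hfs.symm)⟩

section Main

variable {m₁ m₂ : ℕ} {lam : Fin m₁ → ℕ}

/-- The combined map, whose bijectivity onto `[0, m₁+m₂)` we study. -/
private def Fmap (m₁ m₂ : ℕ) (lam : Fin m₁ → ℕ) (b : Fin m₂ → ℕ) :
    Fin m₁ ⊕ Fin m₂ → ℤ :=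
  Sum.elim (fun j : Fin m₁ => (betaSet m₁ lam j : ℤ))
    (fun k : Fin m₂ => (m₁ : ℤ) + m₂ - 1 - (betaSet m₂ b k : ℤ))

private lemma Fmap_inj_range (m₁ m₂ : ℕ) (lam : Fin m₁ → ℕ) (b : Fin m₂ → ℕ)
    (hlam : ∀ j k : Fin m₁, j ≤ k → lam k ≤ lam j)
    (hb : ∀ j k : Fin m₂, j ≤ k → b k ≤ b j)
    (hbound : ∀ j : Fin m₁, lam j ≤ m₂) (hb_le : ∀ k : Fin m₂, b k ≤ m₁)
    (hcross : ∀ (j : Fin m₁) (k : Fin m₂), (lam j : ℤ) + b k ≠ (j : ℤ) + (k : ℤ) + 1) :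
    Function.Injective (Fmap m₁ m₂ lam b) ∧
      ∀ s, 0 ≤ Fmap m₁ m₂ lam b s ∧ Fmap m₁ m₂ lam b s < m₁ + m₂ := by
  constructor
  · rintro (j | k) (j' | k') h <;>
      simp only [Fmap, Sum.elim_inl, Sum.elim_inr] at h
    · rw [betaSet_cast, betaSet_cast] at h
      congr 1
      apply Fin.ext
      rcases le_total j j' with hle | hle
      · have h1 := hlam j j' hle
        have h2 : (j : ℕ) ≤ j' := hle
        omega
      · have h1 := hlam j' j hle
        have h2 : (j' : ℕ) ≤ j := hle
        omega
    · rw [betaSet_cast, betaSet_cast] at h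
      exact absurd (by omega : (lam j : ℤ) + b k' = (j : ℤ) + k' + 1) (hcross j k')
    · rw [betaSet_cast, betaSet_cast] at h
      exact absurd (by omega : (lam j' : ℤ) + b k = (j' : ℤ) + k + 1) (hcross j' k)
    · rw [betaSet_cast, betaSet_cast] at h
      congr 1
      apply Fin.ext
      rcases le_total k k' with hle | hle
      · have h1 := hb k k' hle
        have h2 : (k : ℕ) ≤ k' := hle
        omega
      · have h1 := hb k' k hle
        have h2 : (k' : ℕ) ≤ k := hle
        omega
  · rintro (j | k) <;> simp only [Fmap, Sum.elim_inl, Sum.elim_inr]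
    · rw [betaSet_cast]
      have h1 := hbound j
      have h2 := j.isLt
      constructor <;> omega
    · rw [betaSet_cast]
      have h1 := hb_le k
      have h2 := k.isLt
      constructor <;> omega

end Main

/-- `μ` is the conjugate of `λ` iff `μ_j = #{i : λ_i ≥ j}` for every `j`;
here `λ` has length at most `m₁` and `μ` is recorded with `m₂` parts. -/
theorem conjugate_iff_beta_complement
    (m₁ m₂ : ℕ)
    (lam : Fin m₁ → ℕ) (mu : Fin m₂ → ℕ)
    (hlam : ∀ j k : Fin m₁, j ≤ k → lam k ≤ lam j)
    (hmu : ∀ j k : Fin m₂, j ≤ k → mu k ≤ mu j)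
    (hbound : ∀ j : Fin m₁, lam j ≤ m₂) :
    (∀ j : Fin m₂, mu j = (Finset.univ.filter fun i : Fin m₁ => (j : ℕ) + 1 ≤ lam i).card)
    ↔ (∀ v : ℤ, 0 ≤ v → v < (m₁ : ℤ) + m₂ →
        ∃! s : Fin m₁ ⊕ Fin m₂,
          Sum.elim (fun j : Fin m₁ => (betaSet m₁ lam j : ℤ))
            (fun k : Fin m₂ => (m₁ : ℤ) + m₂ - 1 - (betaSet m₂ mu k : ℤ)) s = v) := by
  classical
  set N := m₁ + m₂ with hN
  -- the conjugate partition
  set nu : Fin m₂ → ℕ :=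
    fun k => (Finset.univ.filter fun i : Fin m₁ => (k : ℕ) + 1 ≤ lam i).card with hnu
  have hnu_anti : ∀ j k : Fin m₂, j ≤ k → nu k ≤ nu j := by
    intro j k hjk
    apply Finset.card_le_card
    intro i hi
    simp only [hnu, Finset.mem_filter, Finset.mem_univ, true_and] at hi ⊢
    have : (j : ℕ) ≤ k := hjk
    omega
  have hnu_le : ∀ k : Fin m₂, nu k ≤ m₁ := by
    intro k
    calc nu k ≤ (Finset.univ : Finset (Fin m₁)).card := Finset.card_le_card (Finset.filter_subset _ _)
    _ = m₁ := by simp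
  have hcross : ∀ (j : Fin m₁) (k : Fin m₂), (lam j : ℤ) + nu k ≠ (j : ℤ) + (k : ℤ) + 1 := by
    intro j k h
    by_cases hc : (k : ℕ) + 1 ≤ lam j
    · have hge : (j : ℕ) + 1 ≤ nu k := by
        have hsub : Finset.Iic j ⊆ Finset.univ.filter (fun i => (k : ℕ) + 1 ≤ lam i) := by
          intro i hi
          simp only [Finset.mem_filter, Finset.mem_univ, true_and]
          exact le_trans hc (hlam i j (Finset.mem_Iic.mp hi))
        have := Finset.card_le_card hsub
        rwa [Fin.card_Iic] at this
      omega
    · have hle : nu k ≤ (j : ℕ) := by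
        have hsub : Finset.univ.filter (fun i => (k : ℕ) + 1 ≤ lam i) ⊆ Finset.Iio j := by
          intro i hi
          simp only [Finset.mem_filter, Finset.mem_univ, true_and] at hi
          rw [Finset.mem_Iio]
          by_contra hij
          push_neg at hij
          have := hlam j i hij
          omega
        have := Finset.card_le_card hsub
        rwa [Fin.card_Iio] at this
      omega
  have hcardsum : Fintype.card (Fin m₁ ⊕ Fin m₂) = N := by simp [hN]
  have hnu_ir := Fmap_inj_range m₁ m₂ lam nu hlam hnu_anti hbound hnu_le hcross
  have Hnu : ∀ v : ℤ, 0 ≤ v → v < (N : ℤ) → ∃! s, Fmap m₁ m₂ lam nu s = v := by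
    have := exists_unique_of_inj N hcardsum (Fmap m₁ m₂ lam nu) hnu_ir.1 (by
      intro s
      have := hnu_ir.2 s
      constructor
      · exact this.1
      · exact_mod_cast this.2)
    intro v hv0 hvN
    exact this v hv0 hvN
  constructor
  · -- forward: mu is the conjugate
    intro h
    have hmueq : mu = nu := funext h
    subst hmueq
    intro v hv0 hvN
    exact Hnu v hv0 (by rw [hN]; push_cast; exact hvN)
  · -- backward
    intro H
    have H' : ∀ v : ℤ, 0 ≤ v → v < (N : ℤ) → ∃! s, Fmap m₁ m₂ lam mu s = v := by
      intro v hv0 hvN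
      exact H v hv0 (by exact_mod_cast hvN)
    obtain ⟨hFμinj, hFμrange⟩ := inj_of_exists_unique N hcardsum (Fmap m₁ m₂ lam mu) H'
    -- the beta sets of mu and nu coincide as finsets
    have hsub : (Finset.univ.image (betaSet m₂ mu)) ⊆ (Finset.univ.image (betaSet m₂ nu)) := by
      intro x hx
      simp only [Finset.mem_image, Finset.mem_univ, true_and] at hx ⊢
      obtain ⟨k, hk⟩ := hx
      -- v := value of Fmap mu (inr k)
      set v : ℤ := Fmap m₁ m₂ lam mu (Sum.inr k) with hv
      have hvr := hFμrange (Sum.inr k)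
      obtain ⟨s, hs, -⟩ := Hnu v hvr.1 (by exact_mod_cast hvr.2)
      cases s with
      | inl j =>
        exfalso
        have hj : Fmap m₁ m₂ lam mu (Sum.inl j) = v := by
          rw [← hs]; simp [Fmap]
        have := hFμinj (hj.trans hv)
        simp at this
      | inr k' =>
        refine ⟨k', ?_⟩
        simp only [Fmap, Sum.elim_inr] at hs hv
        have : ((betaSet m₂ nu k' : ℕ) : ℤ) = ((betaSet m₂ mu k : ℕ) : ℤ) := by omega
        have h2 : betaSet m₂ nu k' = betaSet m₂ mu k := by exact_mod_cast this
        rw [h2, hk]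
    have hmubeta_inj : Function.Injective (betaSet m₂ mu) := by
      intro k k' hkk
      have : Fmap m₁ m₂ lam mu (Sum.inr k) = Fmap m₁ m₂ lam mu (Sum.inr k') := by
        simp [Fmap, hkk]
      have := hFμinj this
      simpa using this
    have hnubeta_inj : Function.Injective (betaSet m₂ nu) := by
      intro k k' hkk
      have : Fmap m₁ m₂ lam nu (Sum.inr k) = Fmap m₁ m₂ lam nu (Sum.inr k') := by
        simp [Fmap, hkk]
      have := hnu_ir.1 this
      simpa using this
    have hcard_mu : (Finset.univ.image (betaSet m₂ mu)).card = m₂ := by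
      rw [Finset.card_image_of_injective _ hmubeta_inj]
      simp
    have hcard_nu : (Finset.univ.image (betaSet m₂ nu)).card = m₂ := by
      rw [Finset.card_image_of_injective _ hnubeta_inj]
      simp
    have himeq : (Finset.univ.image (betaSet m₂ mu)) = (Finset.univ.image (betaSet m₂ nu)) :=
      Finset.eq_of_subset_of_card_le hsub (by rw [hcard_mu, hcard_nu])
    -- strict antitonicity of beta sets
    have hanti : ∀ (b : Fin m₂ → ℕ), (∀ j k : Fin m₂, j ≤ k → b k ≤ b j) →
        StrictMono (fun k : Fin m₂ => betaSet m₂ b (k.rev)) := by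
      intro b hbanti k k' hkk
      have hr : k'.rev < k.rev := by
        rw [Fin.rev_lt_rev]
        exact hkk
      have h1 := hbanti k'.rev k.rev hr.le
      have h2 : (k'.rev : ℕ) < k.rev := hr
      have h3 := (k.rev).isLt
      simp only [betaSet]
      omega
    -- apply orderEmbOfFin uniqueness
    set s : Finset ℕ := Finset.univ.image (betaSet m₂ mu) with hsdef
    have hscard : s.card = m₂ := hcard_mu
    have hmu_mem : ∀ x : Fin m₂, betaSet m₂ mu (x.rev) ∈ s := by
      intro x
      simp only [hsdef, Finset.mem_image]
      exact ⟨x.rev, Finset.mem_univ _, rfl⟩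
    have hnu_mem : ∀ x : Fin m₂, betaSet m₂ nu (x.rev) ∈ s := by
      intro x
      rw [himeq]
      simp only [Finset.mem_image]
      exact ⟨x.rev, Finset.mem_univ _, rfl⟩
    have heq1 := Finset.orderEmbOfFin_unique hscard hmu_mem (hanti mu hmu)
    have heq2 := Finset.orderEmbOfFin_unique hscard hnu_mem (hanti nu hnu_anti)
    have hfuneq : ∀ k : Fin m₂, betaSet m₂ mu k = betaSet m₂ nu k := by
      intro k
      have := congrFun (heq1.trans heq2.symm) k.rev
      simpa [Fin.rev_rev] using this
    intro j
    have := hfuneq j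
    simp only [betaSet] at this
    have : mu j = nu j := by omega
    exact this
end

section
/- Fix an integer t ≥ 2 and positive integers m₁, m₂. Let λ be a partition of length at most t·m₁ and μ a partition of length at most t·m₂. (i) If μ = λ' (the conjugate of λ), then n_i(λ, t·m₁) + n_{t−1−i}(μ, t·m₂) = m₁ + m₂ for every 0 ≤ i ≤ t−1. (ii) Conversely, if λ and μ are both t-cores and n_i(λ, t·m₁) + n_{t−1−i}(μ, t·m₂) = m₁ + m₂ for every 0 ≤ i ≤ t−1, then μ = λ'. -/
open BigOperators

/-- `λ` is a `t`-core: whenever a beta number is `≥ t`, the beta number `β - t` also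
occurs (equivalently, no hook length of `λ` equals `t`). -/
def IsTCore (t m : ℕ) (lam : Fin m → ℕ) : Prop :=
  ∀ j : Fin m, t ≤ betaSet m lam j →
    ∃ k : Fin m, betaSet m lam k = betaSet m lam j - t

/-- `μ` (of length at most `m₂`) is the conjugate partition of `λ` (of length at most
`m₁`): all parts of `λ` are at most `m₂` and `μ_j = #{i : λ_i ≥ j}`. -/
def IsConjugate (m₁ m₂ : ℕ) (lam : Fin m₁ → ℕ) (mu : Fin m₂ → ℕ) : Prop :=
  (∀ i : Fin m₁, lam i ≤ m₂) ∧
    ∀ j : Fin m₂, mu j = (Finset.univ.filter fun i : Fin m₁ => (j : ℕ) + 1 ≤ lam i).card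

namespace ConjAux

open Finset

variable {m n : ℕ}

lemma beta_strictAnti (lam : Fin m → ℕ) (hlam : ∀ j k : Fin m, j ≤ k → lam k ≤ lam j)
    {j k : Fin m} (h : j < k) : betaSet m lam k < betaSet m lam j := by
  have h1 := hlam j k h.le
  have h2 := j.isLt
  have h3 := k.isLt
  have h4 : (j : ℕ) < (k : ℕ) := h
  unfold betaSet
  omega

lemma beta_inj (lam : Fin m → ℕ) (hlam : ∀ j k : Fin m, j ≤ k → lam k ≤ lam j) :
    Function.Injective (betaSet m lam) := by
  intro j k h
  rcases lt_trichotomy j k with hc | hc | hc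
  · exact absurd h (beta_strictAnti lam hlam hc).ne'
  · exact hc
  · exact absurd h (beta_strictAnti lam hlam hc).ne

lemma mu_le {lam : Fin m → ℕ} {mu : Fin n → ℕ} (hconj : IsConjugate m n lam mu)
    (k : Fin n) : mu k ≤ m := by
  rw [hconj.2 k]
  exact le_trans (Finset.card_filter_le _ _) (by simp)

lemma mu_anti {lam : Fin m → ℕ} {mu : Fin n → ℕ} (hconj : IsConjugate m n lam mu) :
    ∀ j k : Fin n, j ≤ k → mu k ≤ mu j := by
  intro j k hjk
  rw [hconj.2 j, hconj.2 k]
  apply Finset.card_le_card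
  intro i hi
  simp only [Finset.mem_filter, Finset.mem_univ, true_and] at hi ⊢
  have : (j : ℕ) ≤ (k : ℕ) := hjk
  omega

lemma cell {lam : Fin m → ℕ} {mu : Fin n → ℕ}
    (hlam : ∀ j k : Fin m, j ≤ k → lam k ≤ lam j)
    (hconj : IsConjugate m n lam mu) (j : Fin m) (k : Fin n) :
    (k : ℕ) + 1 ≤ lam j ↔ (j : ℕ) + 1 ≤ mu k := by
  rw [hconj.2 k]
  constructor
  · intro h
    have hsub : Finset.Iic j ⊆ Finset.univ.filter fun i : Fin m => (k : ℕ) + 1 ≤ lam i := by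
      intro i hi
      simp only [Finset.mem_Iic] at hi
      simp only [Finset.mem_filter, Finset.mem_univ, true_and]
      exact le_trans h (hlam i j hi)
    have := Finset.card_le_card hsub
    rwa [Fin.card_Iic] at this
  · intro h
    by_contra hcon
    push_neg at hcon
    have hsub : (Finset.univ.filter fun i : Fin m => (k : ℕ) + 1 ≤ lam i) ⊆ Finset.Iio j := by
      intro i hi
      simp only [Finset.mem_filter, Finset.mem_univ, true_and] at hi
      simp only [Finset.mem_Iio]
      by_contra hji
      push_neg at hji
      have := hlam j i hji
      omega
    have := Finset.card_le_card hsub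
    rw [Fin.card_Iio] at this
    omega

lemma beta_sum_ne {lam : Fin m → ℕ} {mu : Fin n → ℕ}
    (hlam : ∀ j k : Fin m, j ≤ k → lam k ≤ lam j)
    (hconj : IsConjugate m n lam mu) (j : Fin m) (k : Fin n) :
    betaSet m lam j + betaSet n mu k ≠ m + n - 1 := by
  have hj := j.isLt
  have hk := k.isLt
  have hc := cell hlam hconj j k
  unfold betaSet
  rcases le_or_gt ((k : ℕ) + 1) (lam j) with h | h
  · have := hc.mp h
    omega
  · have h2 : ¬ ((j : ℕ) + 1 ≤ mu k) := fun hh => by have := hc.mpr hh; omega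
    omega

lemma cover {lam : Fin m → ℕ} {mu : Fin n → ℕ} (hm : 1 ≤ m) (hn : 1 ≤ n)
    (hlam : ∀ j k : Fin m, j ≤ k → lam k ≤ lam j)
    (hconj : IsConjugate m n lam mu) :
    Disjoint (Finset.univ.image (betaSet m lam))
        (Finset.univ.image (fun k => m + n - 1 - betaSet n mu k)) ∧
      (Finset.univ.image (betaSet m lam)) ∪
        (Finset.univ.image (fun k => m + n - 1 - betaSet n mu k)) = Finset.range (m + n) := by
  have hmuanti := mu_anti hconj
  have hmub : ∀ k : Fin n, betaSet n mu k ≤ m + n - 1 := by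
    intro k
    have h1 := mu_le hconj k
    have h2 := k.isLt
    unfold betaSet
    omega
  have hlamb : ∀ j : Fin m, betaSet m lam j < m + n := by
    intro j
    have h1 := hconj.1 j
    have h2 := j.isLt
    unfold betaSet
    omega
  have hdisj : Disjoint (Finset.univ.image (betaSet m lam))
      (Finset.univ.image (fun k => m + n - 1 - betaSet n mu k)) := by
    rw [Finset.disjoint_left]
    intro a haL haR
    simp only [Finset.mem_image, Finset.mem_univ, true_and] at haL haR
    obtain ⟨j, hj⟩ := haL
    obtain ⟨k, hk⟩ := haR
    have h1 := hmub k
    exact beta_sum_ne hlam hconj j k (by omega)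
  refine ⟨hdisj, ?_⟩
  have hsub : (Finset.univ.image (betaSet m lam)) ∪
      (Finset.univ.image (fun k => m + n - 1 - betaSet n mu k)) ⊆ Finset.range (m + n) := by
    intro x hx
    rw [Finset.mem_union] at hx
    rw [Finset.mem_range]
    rcases hx with hx | hx <;>
      simp only [Finset.mem_image, Finset.mem_univ, true_and] at hx
    · obtain ⟨j, hj⟩ := hx
      have := hlamb j
      omega
    · obtain ⟨k, hk⟩ := hx
      omega
  have hrinj : Function.Injective (fun k => m + n - 1 - betaSet n mu k) := by
    intro a b hab
    simp only at hab
    have h1 := hmub a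
    have h2 := hmub b
    exact beta_inj mu hmuanti (by omega)
  symm
  apply (Finset.eq_of_subset_of_card_le hsub ?_).symm
  rw [Finset.card_range, Finset.card_union_of_disjoint hdisj,
    Finset.card_image_of_injective _ (beta_inj lam hlam),
    Finset.card_image_of_injective _ hrinj, Finset.card_univ, Finset.card_univ,
    Fintype.card_fin, Fintype.card_fin]

lemma mem_cover {lam : Fin m → ℕ} {mu : Fin n → ℕ} (hm : 1 ≤ m) (hn : 1 ≤ n)
    (hlam : ∀ j k : Fin m, j ≤ k → lam k ≤ lam j)
    (hconj : IsConjugate m n lam mu) {x : ℕ} (hx : x < m + n) :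
    (∃ j, betaSet m lam j = x) ↔ ¬ ∃ k, betaSet n mu k = m + n - 1 - x := by
  obtain ⟨hdisj, hunion⟩ := cover hm hn hlam hconj
  have hmub : ∀ k : Fin n, betaSet n mu k ≤ m + n - 1 := by
    intro k
    have h1 := mu_le hconj k
    have h2 := k.isLt
    unfold betaSet
    omega
  have hR : x ∈ Finset.univ.image (fun k => m + n - 1 - betaSet n mu k) ↔
      ∃ k, betaSet n mu k = m + n - 1 - x := by
    simp only [Finset.mem_image, Finset.mem_univ, true_and]
    constructor
    · rintro ⟨k, hk⟩
      exact ⟨k, by have := hmub k; omega⟩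
    · rintro ⟨k, hk⟩
      exact ⟨k, by have := hmub k; omega⟩
  have hL : x ∈ Finset.univ.image (betaSet m lam) ↔ ∃ j, betaSet m lam j = x := by
    simp only [Finset.mem_image, Finset.mem_univ, true_and]
  have hxu : x ∈ (Finset.univ.image (betaSet m lam)) ∪
      (Finset.univ.image (fun k => m + n - 1 - betaSet n mu k)) := by
    rw [hunion, Finset.mem_range]; exact hx
  rw [Finset.mem_union] at hxu
  constructor
  · intro h hcon
    rw [← hR] at hcon
    rw [← hL] at h
    exact Finset.disjoint_left.mp hdisj h hcon
  · intro h
    rw [← hR] at h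
    rw [← hL]
    tauto

lemma mod_reflect (t K y : ℕ) (ht : 0 < t) (hy : y < t * K) :
    (t * K - 1 - y) % t = t - 1 - y % t := by
  have hr : y % t < t := Nat.mod_lt _ ht
  have hdm : t * (y / t) + y % t = y := Nat.div_add_mod y t
  have hq : y / t < K := by
    by_contra hc
    push_neg at hc
    have := Nat.mul_le_mul_left t hc
    omega
  have hdec : t * K = t * (y / t) + t * (K - 1 - y / t) + t := by
    have h1 : t * K = t * (y / t + (K - 1 - y / t) + 1) := by
      congr 1
      omega
    rw [h1, Nat.mul_add, Nat.mul_add, Nat.mul_one]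
  have key : t * K - 1 - y = t * (K - 1 - y / t) + (t - 1 - y % t) := by omega
  rw [key, Nat.mul_add_mod]
  exact Nat.mod_eq_of_lt (by omega)

lemma card_range_mul_filter (t K i : ℕ) (ht : 0 < t) (hi : i < t) :
    ((Finset.range (t * K)).filter fun x => x % t = i).card = K := by
  have himg : ((Finset.range (t * K)).filter fun x => x % t = i)
      = (Finset.range K).image fun k => t * k + i := by
    ext x
    simp only [Finset.mem_filter, Finset.mem_range, Finset.mem_image]
    constructor
    · rintro ⟨hx, hmod⟩
      have hdm := Nat.div_add_mod x t
      refine ⟨x / t, ?_, by omega⟩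
      by_contra hc
      push_neg at hc
      have := Nat.mul_le_mul_left t hc
      omega
    · rintro ⟨k, hk, rfl⟩
      have h2 : t * (k + 1) = t * k + t := by ring
      have h3 : t * (k + 1) ≤ t * K := Nat.mul_le_mul_left t hk
      refine ⟨by omega, ?_⟩
      rw [Nat.mul_add_mod]
      exact Nat.mod_eq_of_lt hi
  rw [himg, Finset.card_image_of_injective _ ?_, Finset.card_range]
  intro a b hab
  simp only at hab
  exact Nat.eq_of_mul_eq_mul_left ht (by omega)

lemma part_i (t m₁ m₂ : ℕ) (ht : 2 ≤ t) (hm₁ : 1 ≤ m₁) (hm₂ : 1 ≤ m₂)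
    (lam : Fin (t * m₁) → ℕ) (mu : Fin (t * m₂) → ℕ)
    (hlam : ∀ j k : Fin (t * m₁), j ≤ k → lam k ≤ lam j)
    (hconj : IsConjugate (t * m₁) (t * m₂) lam mu) :
    ∀ i < t, ncount t (t * m₁) lam i + ncount t (t * m₂) mu (t - 1 - i) = m₁ + m₂ := by
  intro i hi
  have ht0 : 0 < t := by omega
  have hm : 1 ≤ t * m₁ := by have := Nat.mul_le_mul ht hm₁; omega
  have hn : 1 ≤ t * m₂ := by have := Nat.mul_le_mul ht hm₂; omega
  have hNt : t * m₁ + t * m₂ = t * (m₁ + m₂) := by ring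
  have hmuanti := mu_anti hconj
  obtain ⟨hdisj, hunion⟩ := cover hm hn hlam hconj
  have hmub : ∀ k : Fin (t * m₂), betaSet (t * m₂) mu k < t * m₁ + t * m₂ := by
    intro k
    have h1 := mu_le hconj k
    have h2 := k.isLt
    unfold betaSet
    omega
  have key : ((Finset.range (t * m₁ + t * m₂)).filter fun x => x % t = i)
      = ((Finset.univ.image (betaSet (t * m₁) lam)).filter fun x => x % t = i) ∪
        ((Finset.univ.image (fun k => t * m₁ + t * m₂ - 1 - betaSet (t * m₂) mu k)).filter
          fun x => x % t = i) := by
    rw [← Finset.filter_union, hunion]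
  have c3 : ((Finset.range (t * m₁ + t * m₂)).filter fun x => x % t = i).card = m₁ + m₂ := by
    rw [hNt]
    exact card_range_mul_filter t (m₁ + m₂) i ht0 hi
  have c1 : ((Finset.univ.image (betaSet (t * m₁) lam)).filter fun x => x % t = i).card
      = ncount t (t * m₁) lam i := by
    rw [Finset.filter_image, Finset.card_image_of_injective _ (beta_inj lam hlam)]
    rfl
  have c2 : ((Finset.univ.image (fun k => t * m₁ + t * m₂ - 1 - betaSet (t * m₂) mu k)).filter
      fun x => x % t = i).card = ncount t (t * m₂) mu (t - 1 - i) := by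
    rw [Finset.filter_image]
    have hrinj : Function.Injective (fun k => t * m₁ + t * m₂ - 1 - betaSet (t * m₂) mu k) := by
      intro a b hab
      simp only at hab
      have h1 := hmub a
      have h2 := hmub b
      exact beta_inj mu hmuanti (by omega)
    rw [Finset.card_image_of_injective _ hrinj]
    unfold ncount
    congr 1
    apply Finset.filter_congr
    intro k _
    have hb := hmub k
    have hmr : (t * m₁ + t * m₂ - 1 - betaSet (t * m₂) mu k) % t
        = t - 1 - betaSet (t * m₂) mu k % t := by
      rw [hNt] at hb ⊢
      exact mod_reflect t (m₁ + m₂) _ ht0 hb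
    rw [hmr]
    have hrt : betaSet (t * m₂) mu k % t < t := Nat.mod_lt _ ht0
    omega
  rw [key, Finset.card_union_of_disjoint (Finset.disjoint_filter_filter hdisj), c1, c2] at c3
  exact c3

lemma dc_eq_range (K : Finset ℕ) (h : ∀ k, k + 1 ∈ K → k ∈ K) : K = Finset.range K.card := by
  have h' : ∀ k, k ∈ K → ∀ j, j ≤ k → j ∈ K := by
    intro k
    induction k with
    | zero =>
      intro hk j hj
      have : j = 0 := by omega
      rwa [this]
    | succ nn ih =>
      intro hk j hj
      rcases Nat.eq_or_lt_of_le hj with rfl | hlt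
      · exact hk
      · exact ih (h nn hk) j (by omega)
  rcases K.eq_empty_or_nonempty with rfl | hne
  · simp
  · obtain ⟨M, hMmem, hMle⟩ : ∃ M, M ∈ K ∧ ∀ x ∈ K, x ≤ M :=
      ⟨K.max' hne, K.max'_mem hne, fun x hx => K.le_max' x hx⟩
    have hKeq : K = Finset.range (M + 1) := by
      ext x
      simp only [Finset.mem_range]
      exact ⟨fun hx => Nat.lt_succ_of_le (hMle x hx), fun hx => h' _ hMmem x (by omega)⟩
    rw [hKeq, Finset.card_range]

lemma core_filter (t : ℕ) (ht : 0 < t) (lam : Fin m → ℕ)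
    (hlam : ∀ j k : Fin m, j ≤ k → lam k ≤ lam j) (hcore : IsTCore t m lam)
    (i : ℕ) (hi : i < t) :
    ((Finset.univ.image (betaSet m lam)).filter fun x => x % t = i)
      = (Finset.range (ncount t m lam i)).image fun k => t * k + i := by
  set S := ((Finset.univ.image (betaSet m lam)).filter fun x => x % t = i) with hS
  have hSmem : ∀ x ∈ S, (∃ j, betaSet m lam j = x) ∧ x % t = i := by
    intro x hx
    rw [hS, Finset.mem_filter] at hx
    simp only [Finset.mem_image, Finset.mem_univ, true_and] at hx
    exact hx
  have hself : ∀ x ∈ S, t * (x / t) + i = x := by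
    intro x hx
    have := (hSmem x hx).2
    have hdm := Nat.div_add_mod x t
    omega
  set K := S.image (fun x => x / t) with hK
  have hKdc : ∀ k, k + 1 ∈ K → k ∈ K := by
    intro k hk
    rw [hK, Finset.mem_image] at hk
    obtain ⟨x, hxS, hxk⟩ := hk
    have hxeq : t * (k + 1) + i = x := by rw [← hxk]; exact hself x hxS
    have hexp : t * (k + 1) = t * k + t := by ring
    obtain ⟨j, hj⟩ := (hSmem x hxS).1
    have hjt : t ≤ betaSet m lam j := by omega
    obtain ⟨j', hj'⟩ := hcore j hjt
    have hj'x : betaSet m lam j' = t * k + i := by omega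
    have hxS' : t * k + i ∈ S := by
      rw [hS, Finset.mem_filter]
      constructor
      · simp only [Finset.mem_image, Finset.mem_univ, true_and]
        exact ⟨j', hj'x⟩
      · rw [Nat.mul_add_mod]
        exact Nat.mod_eq_of_lt hi
    rw [hK, Finset.mem_image]
    refine ⟨t * k + i, hxS', ?_⟩
    rw [Nat.mul_add_div ht, Nat.div_eq_of_lt hi]
    omega
  have hinjS : Set.InjOn (fun x => x / t) S := by
    intro a ha b hb hab
    have h1 := hself a ha
    have h2 := hself b hb
    simp only at hab
    rw [hab] at h1
    omega
  have hKcard : K.card = ncount t m lam i := by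
    rw [hK, Finset.card_image_of_injOn hinjS, hS, Finset.filter_image,
      Finset.card_image_of_injective _ (beta_inj lam hlam)]
    rfl
  have hKr : K = Finset.range (ncount t m lam i) := by
    rw [← hKcard]
    exact dc_eq_range K hKdc
  ext x
  simp only [Finset.mem_image, Finset.mem_range]
  constructor
  · intro hx
    refine ⟨x / t, ?_, hself x hx⟩
    have : x / t ∈ K := by rw [hK]; exact Finset.mem_image_of_mem _ hx
    rw [hKr, Finset.mem_range] at this
    exact this
  · rintro ⟨k, hk, rfl⟩
    have hkK : k ∈ K := by rw [hKr, Finset.mem_range]; exact hk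
    rw [hK, Finset.mem_image] at hkK
    obtain ⟨y, hyS, hyk⟩ := hkK
    have := hself y hyS
    have : t * k + i = y := by rw [← hyk]; exact hself y hyS
    rwa [this]

lemma core_beta_lt (t C : ℕ) (ht : 0 < t) (lam : Fin m → ℕ)
    (hlam : ∀ j k : Fin m, j ≤ k → lam k ≤ lam j) (hcore : IsTCore t m lam)
    (hC : ∀ i, i < t → ncount t m lam i ≤ C) (j : Fin m) :
    betaSet m lam j < t * C := by
  set x := betaSet m lam j with hxdef
  have hx : x ∈ (Finset.univ.image (betaSet m lam)).filter (fun y => y % t = x % t) :=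
    Finset.mem_filter.mpr ⟨Finset.mem_image_of_mem _ (Finset.mem_univ j), rfl⟩
  rw [core_filter t ht lam hlam hcore (x % t) (Nat.mod_lt _ ht)] at hx
  rw [Finset.mem_image] at hx
  obtain ⟨k, hk, hkx⟩ := hx
  rw [Finset.mem_range] at hk
  have h1 := hC (x % t) (Nat.mod_lt _ ht)
  have h2 : t * (k + 1) ≤ t * C := Nat.mul_le_mul_left t (by omega)
  have h3 : t * (k + 1) = t * k + t := by ring
  have h4 : x % t < t := Nat.mod_lt _ ht
  omega

lemma cores_eq_of_ncount_eq (t : ℕ) (ht : 0 < t) (mu nu : Fin n → ℕ)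
    (hmu : ∀ j k : Fin n, j ≤ k → mu k ≤ mu j)
    (hnu : ∀ j k : Fin n, j ≤ k → nu k ≤ nu j)
    (hcmu : IsTCore t n mu) (hcnu : IsTCore t n nu)
    (hcount : ∀ i, i < t → ncount t n mu i = ncount t n nu i) :
    ∀ j, mu j = nu j := by
  have hfilters : ∀ i, i < t →
      ((Finset.univ.image (betaSet n mu)).filter fun x => x % t = i)
        = ((Finset.univ.image (betaSet n nu)).filter fun x => x % t = i) := by
    intro i hi
    rw [core_filter t ht mu hmu hcmu i hi, core_filter t ht nu hnu hcnu i hi, hcount i hi]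
  have hBM : Finset.univ.image (betaSet n mu) = Finset.univ.image (betaSet n nu) := by
    ext x
    constructor
    · intro hx
      have h1 : x ∈ (Finset.univ.image (betaSet n mu)).filter (fun y => y % t = x % t) :=
        Finset.mem_filter.mpr ⟨hx, rfl⟩
      rw [hfilters (x % t) (Nat.mod_lt _ ht)] at h1
      exact (Finset.mem_filter.mp h1).1
    · intro hx
      have h1 : x ∈ (Finset.univ.image (betaSet n nu)).filter (fun y => y % t = x % t) :=
        Finset.mem_filter.mpr ⟨hx, rfl⟩
      rw [← hfilters (x % t) (Nat.mod_lt _ ht)] at h1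
      exact (Finset.mem_filter.mp h1).1
  have hcardM : (Finset.univ.image (betaSet n mu)).card = n := by
    rw [Finset.card_image_of_injective _ (beta_inj mu hmu), Finset.card_univ, Fintype.card_fin]
  have hmonoM : StrictMono (fun j : Fin n => betaSet n mu j.rev) := by
    intro a b hab
    exact beta_strictAnti mu hmu (Fin.rev_lt_rev.mpr hab)
  have hmonoN : StrictMono (fun j : Fin n => betaSet n nu j.rev) := by
    intro a b hab
    exact beta_strictAnti nu hnu (Fin.rev_lt_rev.mpr hab)
  have hM := Finset.orderEmbOfFin_unique hcardM
    (f := fun j : Fin n => betaSet n mu j.rev)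
    (fun x => Finset.mem_image_of_mem _ (Finset.mem_univ _)) hmonoM
  have hN := Finset.orderEmbOfFin_unique hcardM
    (f := fun j : Fin n => betaSet n nu j.rev)
    (fun x => by rw [hBM]; exact Finset.mem_image_of_mem _ (Finset.mem_univ _)) hmonoN
  have heq : (fun j : Fin n => betaSet n mu j.rev) = fun j : Fin n => betaSet n nu j.rev :=
    hM.trans hN.symm
  intro j
  have := congrFun heq j.rev
  simp only [betaSet, Fin.rev_rev] at this
  omega

end ConjAux

/-- (i) If `μ = λ'` then `n_i(λ, t m₁) + n_{t-1-i}(μ, t m₂) = m₁ + m₂` for all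
`0 ≤ i ≤ t-1`; (ii) conversely, if `λ` and `μ` are `t`-cores satisfying these
equalities, then `μ = λ'`. -/
theorem conjugate_ncount_relation
    (t m₁ m₂ : ℕ) (ht : 2 ≤ t) (hm₁ : 1 ≤ m₁) (hm₂ : 1 ≤ m₂)
    (lam : Fin (t * m₁) → ℕ) (mu : Fin (t * m₂) → ℕ)
    (hlam : ∀ j k : Fin (t * m₁), j ≤ k → lam k ≤ lam j)
    (hmu : ∀ j k : Fin (t * m₂), j ≤ k → mu k ≤ mu j) :
    (IsConjugate (t * m₁) (t * m₂) lam mu →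
      ∀ i < t, ncount t (t * m₁) lam i + ncount t (t * m₂) mu (t - 1 - i) = m₁ + m₂)
    ∧ (IsTCore t (t * m₁) lam → IsTCore t (t * m₂) mu →
      (∀ i < t, ncount t (t * m₁) lam i + ncount t (t * m₂) mu (t - 1 - i) = m₁ + m₂) →
      IsConjugate (t * m₁) (t * m₂) lam mu) := by
  constructor
  · intro hconj
    exact ConjAux.part_i t m₁ m₂ ht hm₁ hm₂ lam mu hlam hconj
  · intro hclam hcmu hcount
    have ht0 : 0 < t := by omega
    have hm : 1 ≤ t * m₁ := by have := Nat.mul_le_mul ht hm₁; omega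
    have hn : 1 ≤ t * m₂ := by have := Nat.mul_le_mul ht hm₂; omega
    have hNt : t * m₁ + t * m₂ = t * (m₁ + m₂) := by ring
    have hCl : ∀ i, i < t → ncount t (t * m₁) lam i ≤ m₁ + m₂ := by
      intro i hi
      have := hcount i hi
      omega
    have hbound : ∀ j, betaSet (t * m₁) lam j < t * (m₁ + m₂) :=
      ConjAux.core_beta_lt t (m₁ + m₂) ht0 lam hlam hclam hCl
    have hlam_le : ∀ j : Fin (t * m₁), lam j ≤ t * m₂ := by
      intro j
      have hj0 : lam j ≤ lam ⟨0, by omega⟩ := hlam ⟨0, by omega⟩ j (by simp [Fin.le_def])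
      have hb := hbound ⟨0, by omega⟩
      unfold betaSet at hb
      simp only [Fin.val_mk] at hb
      omega
    set nu : Fin (t * m₂) → ℕ :=
      fun k => (Finset.univ.filter fun i : Fin (t * m₁) => (k : ℕ) + 1 ≤ lam i).card
      with hnu_def
    have hconjn : IsConjugate (t * m₁) (t * m₂) lam nu := ⟨hlam_le, fun k => rfl⟩
    have hnu_anti := ConjAux.mu_anti hconjn
    have hpi := ConjAux.part_i t m₁ m₂ ht hm₁ hm₂ lam nu hlam hconjn
    have hcounts_eq : ∀ i, i < t → ncount t (t * m₂) mu i = ncount t (t * m₂) nu i := by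
      intro i hi
      have h1 := hcount (t - 1 - i) (by omega)
      have h2 := hpi (t - 1 - i) (by omega)
      rw [show t - 1 - (t - 1 - i) = i from by omega] at h1 h2
      omega
    have hcov : ∀ z : ℕ, z < t * m₁ + t * m₂ →
        ((∃ j, betaSet (t * m₁) lam j = z) ↔
          ¬ ∃ k, betaSet (t * m₂) nu k = t * m₁ + t * m₂ - 1 - z) :=
      fun z hz => ConjAux.mem_cover hm hn hlam hconjn hz
    have hnub : ∀ k : Fin (t * m₂), betaSet (t * m₂) nu k < t * m₁ + t * m₂ := by
      intro k
      have h1 := ConjAux.mu_le hconjn k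
      have h2 := k.isLt
      unfold betaSet
      omega
    have hnu_core : IsTCore t (t * m₂) nu := by
      intro k hk
      have hxlt := hnub k
      set x := betaSet (t * m₂) nu k with hx
      set N := t * m₁ + t * m₂ with hNdef
      have h1 : ¬ ∃ j, betaSet (t * m₁) lam j = N - 1 - x := by
        intro ⟨j, hj⟩
        have := (hcov (N - 1 - x) (by omega)).mp ⟨j, hj⟩
        apply this
        exact ⟨k, by omega⟩
      have h2 : ¬ ∃ j, betaSet (t * m₁) lam j = N - 1 - x + t := by
        rintro ⟨j, hj⟩
        obtain ⟨j', hj'⟩ := hclam j (by omega)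
        exact h1 ⟨j', by omega⟩
      have h3 : ∃ k', betaSet (t * m₂) nu k' = N - 1 - (N - 1 - x + t) := by
        by_contra hc
        exact h2 ((hcov (N - 1 - x + t) (by omega)).mpr hc)
      obtain ⟨k', hk'⟩ := h3
      exact ⟨k', by omega⟩
    have hfinal := ConjAux.cores_eq_of_ncount_eq t ht0 mu nu hmu hnu_anti hcmu hnu_core hcounts_eq
    exact ⟨hlam_le, fun k => hfinal k⟩
end

section
/- Let z ≥ 0 and m ≥ 1 be integers, and let λ be a partition of length at most m with λ_1 + z ≤ m. Then λ is z-asymmetric if and only if for every integer ξ with 0 ≤ ξ ≤ m − z − 1, the number ξ occurs in the beta set β(λ,m) precisely when the number 2m − z − 1 − ξ does not occur in β(λ,m). -/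
open BigOperators

/-- The (Frobenius) rank of a partition: `max {k : λ_k ≥ k}` (`0` for the empty
partition). -/
def rankP (m : ℕ) (lam : Fin m → ℕ) : ℕ :=
  (Finset.univ.filter fun j : Fin m => (j : ℕ) + 1 ≤ lam j).sup fun j => (j : ℕ) + 1

/-- `λ` is `z`-asymmetric: `λ'_i - i = λ_i - i + z` for all `1 ≤ i ≤ rank(λ)`, where
`λ'_i = #{j : λ_j ≥ i}` is the conjugate partition. -/
def ZAsym (z : ℤ) (m : ℕ) (lam : Fin m → ℕ) : Prop :=
  ∀ i : Fin m, (i : ℕ) + 1 ≤ rankP m lam →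
    ((Finset.univ.filter fun j : Fin m => (i : ℕ) + 1 ≤ lam j).card : ℤ) = (lam i : ℤ) + z

/-! ### Auxiliary development -/

/-- The conjugate partition: `λ'_k = #{j : λ_j ≥ k}`. -/
def conjP (m : ℕ) (lam : Fin m → ℕ) (k : ℕ) : ℕ :=
  (Finset.univ.filter fun j : Fin m => k ≤ lam j).card

lemma conjP_le (m : ℕ) (lam : Fin m → ℕ) (k : ℕ) : conjP m lam k ≤ m := by
  have h := Finset.card_filter_le (Finset.univ : Finset (Fin m))
    (fun j : Fin m => k ≤ lam j)
  simpa [conjP] using h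

lemma conjP_zero (m : ℕ) (lam : Fin m → ℕ) : conjP m lam 0 = m := by
  simp [conjP]

lemma conjP_anti (m : ℕ) (lam : Fin m → ℕ) {k l : ℕ} (h : k ≤ l) :
    conjP m lam l ≤ conjP m lam k := by
  apply Finset.card_le_card
  intro j hj
  simp only [Finset.mem_filter, Finset.mem_univ, true_and] at hj ⊢
  omega

lemma mem_iff_lt_conjP {m : ℕ} {lam : Fin m → ℕ}
    (hanti : ∀ j k : Fin m, j ≤ k → lam k ≤ lam j) (k : ℕ) (j : Fin m) :
    k ≤ lam j ↔ (j : ℕ) < conjP m lam k := by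
  constructor
  · intro h
    have hsub : Finset.Iic j ⊆ Finset.univ.filter fun x : Fin m => k ≤ lam x := by
      intro x hx
      simp only [Finset.mem_Iic] at hx
      simp only [Finset.mem_filter, Finset.mem_univ, true_and]
      exact le_trans h (hanti x j hx)
    have hc := Finset.card_le_card hsub
    rw [Fin.card_Iic] at hc
    have : (j : ℕ) + 1 ≤ conjP m lam k := hc
    omega
  · intro h
    by_contra hk
    push_neg at hk
    have hsub : (Finset.univ.filter fun x : Fin m => k ≤ lam x) ⊆ Finset.Iio j := by
      intro x hx
      simp only [Finset.mem_filter, Finset.mem_univ, true_and] at hx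
      simp only [Finset.mem_Iio]
      by_contra hxx
      push_neg at hxx
      have := hanti j x hxx
      omega
    have hc := Finset.card_le_card hsub
    rw [Fin.card_Iio] at hc
    have : conjP m lam k ≤ (j : ℕ) := hc
    omega

lemma rank_iff {m : ℕ} {lam : Fin m → ℕ}
    (hanti : ∀ j k : Fin m, j ≤ k → lam k ≤ lam j) (i : Fin m) :
    (i : ℕ) + 1 ≤ rankP m lam ↔ (i : ℕ) + 1 ≤ lam i := by
  constructor
  · intro h
    by_contra hlt
    push_neg at hlt
    have hsup : rankP m lam ≤ (i : ℕ) := by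
      apply Finset.sup_le
      intro j hj
      simp only [Finset.mem_filter, Finset.mem_univ, true_and] at hj
      by_contra hji
      push_neg at hji
      have hij : i ≤ j := by
        rw [Fin.le_def]; omega
      have := hanti i j hij
      omega
    omega
  · intro h
    have hmem : i ∈ Finset.univ.filter fun j : Fin m => (j : ℕ) + 1 ≤ lam j := by
      simp only [Finset.mem_filter, Finset.mem_univ, true_and]; exact h
    exact Finset.le_sup (f := fun j : Fin m => (j : ℕ) + 1) hmem

lemma zasym_iff {z m : ℕ} {lam : Fin m → ℕ}
    (hanti : ∀ j k : Fin m, j ≤ k → lam k ≤ lam j) :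
    ZAsym (z : ℤ) m lam ↔
      ∀ i : Fin m, (i : ℕ) + 1 ≤ lam i → conjP m lam ((i : ℕ) + 1) = lam i + z := by
  unfold ZAsym
  constructor
  · intro h i hi
    have h2 := h i ((rank_iff hanti i).2 hi)
    have h3 : ((conjP m lam ((i : ℕ) + 1) : ℕ) : ℤ) = (lam i : ℤ) + z := h2
    exact_mod_cast h3
  · intro h i hi
    have h2 := h i ((rank_iff hanti i).1 hi)
    show ((conjP m lam ((i : ℕ) + 1) : ℕ) : ℤ) = (lam i : ℤ) + z
    exact_mod_cast congrArg (fun n : ℕ => (n : ℤ)) h2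

lemma key {m : ℕ} {lam : Fin m → ℕ}
    (hanti : ∀ j k : Fin m, j ≤ k → lam k ≤ lam j) (v : ℕ) (hv : v < m) :
    (∃ j : Fin m, lam j + v = (j : ℕ)) ↔ ¬ ∃ k : ℕ, conjP m lam k = k + v := by
  constructor
  · rintro ⟨j, hj⟩ ⟨k, hk⟩
    rcases le_or_gt k (lam j) with h | h
    · have hlt := (mem_iff_lt_conjP hanti k j).1 h
      omega
    · have hnlt : ¬ ((j : ℕ) < conjP m lam k) := fun hc =>
        absurd ((mem_iff_lt_conjP hanti k j).2 hc) (by omega)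
      omega
  · intro hne
    have hex : ∃ n, conjP m lam (m + 1) < m + 1 + v ∧ True := ⟨0, by
      have := conjP_le m lam (m + 1); omega, trivial⟩
    have hexist : ∃ n : ℕ, conjP m lam n < n + v := ⟨m + 1, by
      have := conjP_le m lam (m + 1); omega⟩
    classical
    let k0 := Nat.find hexist
    have hk0 : conjP m lam k0 < k0 + v := Nat.find_spec hexist
    have h0 : ¬ (conjP m lam 0 < 0 + v) := by
      rw [conjP_zero]; omega
    have hk0pos : 1 ≤ k0 := by
      rcases Nat.eq_zero_or_pos k0 with h | h
      · exact absurd (h ▸ hk0) h0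
      · exact h
    have hprev : ¬ (conjP m lam (k0 - 1) < (k0 - 1) + v) :=
      Nat.find_min hexist (by omega)
    push_neg at hprev
    set k := k0 - 1 with hkdef
    have hkk : k0 = k + 1 := by omega
    rw [hkk] at hk0
    have hne1 : conjP m lam k ≠ k + v := fun h => hne ⟨k, h⟩
    have hne2 : conjP m lam (k + 1) ≠ (k + 1) + v := fun h => hne ⟨k + 1, h⟩
    have h1 : k + v + 1 ≤ conjP m lam k := by omega
    have h2 : conjP m lam (k + 1) ≤ k + v := by omega
    have hjm : k + v < m := by
      have := conjP_le m lam k; omega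
    refine ⟨⟨k + v, hjm⟩, ?_⟩
    have hl : k ≤ lam ⟨k + v, hjm⟩ := by
      apply (mem_iff_lt_conjP hanti k ⟨k + v, hjm⟩).2
      simpa using h1
    have hu : lam ⟨k + v, hjm⟩ < k + 1 := by
      by_contra hc
      push_neg at hc
      have := (mem_iff_lt_conjP hanti (k + 1) ⟨k + v, hjm⟩).1 hc
      simp only at this
      omega
    simp only
    omega

lemma main1 {z m : ℕ} {lam : Fin m → ℕ}
    (hanti : ∀ j k : Fin m, j ≤ k → lam k ≤ lam j)
    (hz : ∀ i : Fin m, (i : ℕ) + 1 ≤ lam i → conjP m lam ((i : ℕ) + 1) = lam i + z)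
    (c : ℕ) (hc1 : 1 ≤ c) (hc2 : c ≤ m - z) :
    (∃ j : Fin m, lam j = (j : ℕ) + c) ↔ ∃ i : ℕ, conjP m lam (i + 1) = i + c + z := by
  constructor
  · rintro ⟨j, hj⟩
    have h1 : (j : ℕ) + 1 ≤ lam j := by omega
    have h2 := hz j h1
    exact ⟨(j : ℕ), by omega⟩
  · rintro ⟨i, hi⟩
    have hle := conjP_le m lam (i + 1)
    have him : i < m := by omega
    have h1 : (i : ℕ) + 1 ≤ lam ⟨i, him⟩ := by
      apply (mem_iff_lt_conjP hanti (i + 1) ⟨i, him⟩).2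
      simp only
      omega
    have h2 := hz ⟨i, him⟩ h1
    simp only at h2
    exact ⟨⟨i, him⟩, by simp only; omega⟩

lemma main2aux {z m : ℕ} {lam : Fin m → ℕ}
    (hanti : ∀ j k : Fin m, j ≤ k → lam k ≤ lam j)
    (hbound : ∀ j : Fin m, lam j + z ≤ m)
    (H : ∀ c : ℕ, 1 ≤ c → c ≤ m - z →
      ((∃ j : Fin m, lam j = (j : ℕ) + c) ↔ ∃ i : ℕ, conjP m lam (i + 1) = i + c + z)) :
    ∀ n : ℕ, ∀ i : Fin m, (i : ℕ) < n → (i : ℕ) + 1 ≤ lam i →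
      conjP m lam ((i : ℕ) + 1) = lam i + z := by
  intro n
  induction n with
  | zero => intro i h; omega
  | succ n IH =>
    intro i hin hi
    have hbd := hbound i
    set ca := lam i - (i : ℕ) with hcadef
    have hca : lam i = (i : ℕ) + ca := by omega
    have hca1 : 1 ≤ ca := by omega
    have hca2 : ca ≤ m - z := by omega
    obtain ⟨i₁, hi₁⟩ := (H ca hca1 hca2).1 ⟨i, hca⟩
    have hii : (i : ℕ) ≤ i₁ := by
      by_contra hcon
      push_neg at hcon
      have hm1 : i₁ < m := lt_trans hcon i.isLt
      have hle1 : (⟨i₁, hm1⟩ : Fin m) ≤ i := by rw [Fin.le_def]; simp only; omega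
      have hlam := hanti ⟨i₁, hm1⟩ i hle1
      have hl : (i₁ : ℕ) + 1 ≤ lam ⟨i₁, hm1⟩ := by omega
      have hIH := IH ⟨i₁, hm1⟩ (show i₁ < n by omega) hl
      simp only at hIH
      omega
    have hmono1 := conjP_anti m lam (show (i : ℕ) + 1 ≤ i₁ + 1 by omega)
    have hgeq : lam i + z ≤ conjP m lam ((i : ℕ) + 1) := by omega
    have hcle := conjP_le m lam ((i : ℕ) + 1)
    set cd := conjP m lam ((i : ℕ) + 1) - (i : ℕ) - z with hcddef
    have hcd : conjP m lam ((i : ℕ) + 1) = (i : ℕ) + z + cd := by omega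
    have hcd1 : 1 ≤ cd := by omega
    have hcd2 : cd ≤ m - z := by omega
    obtain ⟨j, hj⟩ := (H cd hcd1 hcd2).2 ⟨(i : ℕ), by omega⟩
    have hij : (i : ℕ) ≤ (j : ℕ) := by
      by_contra hcon
      push_neg at hcon
      have hl : (j : ℕ) + 1 ≤ lam j := by omega
      have hIH := IH j (by omega) hl
      have hmono2 := conjP_anti m lam (show (j : ℕ) + 1 ≤ (i : ℕ) + 1 by omega)
      omega
    have hlam2 := hanti i j (by rw [Fin.le_def]; omega)
    omega

lemma beta_eq1 {m z c : ℕ} {lam : Fin m → ℕ} {ξ : ℤ}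
    (hξc : (c : ℤ) = (m : ℤ) - z - ξ) (hc1 : 1 ≤ c) (hc2 : c + z ≤ m) (j : Fin m) :
    (betaSet m lam j : ℤ) = ξ ↔ lam j + (c + z - 1) = (j : ℕ) := by
  unfold betaSet
  have hjm := j.isLt
  omega

lemma beta_eq2 {m z c : ℕ} {lam : Fin m → ℕ} {ξ : ℤ}
    (hξc : (c : ℤ) = (m : ℤ) - z - ξ) (hc1 : 1 ≤ c) (hc2 : c + z ≤ m) (j : Fin m) :
    (betaSet m lam j : ℤ) = 2 * m - z - 1 - ξ ↔ lam j = (j : ℕ) + c := by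
  unfold betaSet
  have hjm := j.isLt
  omega

lemma e4lem {m z c : ℕ} (lam : Fin m → ℕ) (hc1 : 1 ≤ c) (hc2 : c + z ≤ m) :
    (∃ k : ℕ, conjP m lam k = k + (c + z - 1)) ↔
      (∃ i : ℕ, conjP m lam (i + 1) = i + c + z) := by
  constructor
  · rintro ⟨k, hk⟩
    have hk0 : k ≠ 0 := by
      intro h
      rw [h, conjP_zero] at hk
      omega
    refine ⟨k - 1, ?_⟩
    have hkk : k - 1 + 1 = k := by omega
    rw [hkk]
    omega
  · rintro ⟨i, hi⟩
    exact ⟨i + 1, by omega⟩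

/-- Core reduction: the beta-set condition at `ξ = m - z - c` is equivalent to the
conjugate condition at `c`. -/
lemma core {z m : ℕ} {lam : Fin m → ℕ}
    (hanti : ∀ j k : Fin m, j ≤ k → lam k ≤ lam j)
    (c : ℕ) (ξ : ℤ) (hξc : (c : ℤ) = (m : ℤ) - z - ξ)
    (hc1 : 1 ≤ c) (hc2 : c + z ≤ m) :
    ((∃ j : Fin m, (betaSet m lam j : ℤ) = ξ) ↔
      ¬ ∃ j : Fin m, (betaSet m lam j : ℤ) = 2 * m - z - 1 - ξ) ↔
    ((∃ j : Fin m, lam j = (j : ℕ) + c) ↔ ∃ i : ℕ, conjP m lam (i + 1) = i + c + z) := by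
  have hv : c + z - 1 < m := by omega
  rw [exists_congr (beta_eq1 hξc hc1 hc2), exists_congr (beta_eq2 hξc hc1 hc2),
    key hanti (c + z - 1) hv, not_iff_not, e4lem lam hc1 hc2]
  exact Iff.comm

/-- A partition `λ` with `λ_1 + z ≤ m` is `z`-asymmetric iff for every
`0 ≤ ξ ≤ m - z - 1`, `ξ` occurs in the beta set `β(λ, m)` precisely when
`2m - z - 1 - ξ` does not. -/
theorem zAsymmetric_iff_beta_condition
    (z m : ℕ) (hm : 1 ≤ m)
    (lam : Fin m → ℕ)
    (hanti : ∀ j k : Fin m, j ≤ k → lam k ≤ lam j)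
    (hbound : ∀ j : Fin m, lam j + z ≤ m) :
    ZAsym (z : ℤ) m lam ↔
      ∀ ξ : ℤ, 0 ≤ ξ → ξ ≤ (m : ℤ) - z - 1 →
        ((∃ j : Fin m, (betaSet m lam j : ℤ) = ξ) ↔
          ¬ ∃ j : Fin m, (betaSet m lam j : ℤ) = 2 * m - z - 1 - ξ) := by
  rw [zasym_iff hanti]
  constructor
  · intro hz ξ hξ0 hξ1
    have hzm : z < m := by omega
    set c : ℕ := m - z - ξ.toNat with hcdef
    have hξc : (c : ℤ) = (m : ℤ) - z - ξ := by omega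
    have hc1 : 1 ≤ c := by omega
    have hc2 : c + z ≤ m := by omega
    exact (core hanti c ξ hξc hc1 hc2).mpr (main1 hanti hz c hc1 (by omega))
  · intro hbeta
    intro i hi
    apply main2aux hanti hbound ?_ m i i.isLt hi
    intro c hc1 hc2
    have hzm : z < m := by omega
    set ξ : ℤ := (m : ℤ) - z - c with hξdef
    have hξ0 : 0 ≤ ξ := by omega
    have hξ1 : ξ ≤ (m : ℤ) - z - 1 := by omega
    exact (core hanti c ξ (by omega) hc1 (by omega)).mp (hbeta ξ hξ0 hξ1)
end

section
/- Let z ≥ 1 and t be integers with 2 ≤ t ≤ z + 1. If a partition λ is both a t-core and z-asymmetric, then λ is the empty partition. -/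
open BigOperators

/-!
Call `x ∉ {β_j}` a gap. For a partition of rank `r` there are at most `r` gaps below `m`, and
`z`-asymmetry exhibits `r` of them, `m + i - λ'_{i+1} = m + i - λ_i - z` for `i < r`; so these are
all of them, and each is at most `m - 1 - z`, with equality only if `λ_i = i + 1`, i.e. `m = β_i`.
For a `t`-core, `x + t` is a gap whenever `x` is, so, as `t ≤ z + 1`, the gaps below `m` are
closed under `x ↦ x + t`. A nonempty partition has the gap `m - λ'_1` below `m`, and iterating
this contradicts finiteness.
-/

open Finset

section Partition

variable {m : ℕ} {lam : Fin m → ℕ}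

def conjPart (m : ℕ) (lam : Fin m → ℕ) (c : ℕ) : ℕ :=
  #{j : Fin m | c ≤ lam j}

lemma conjPart_le (c : ℕ) : conjPart m lam c ≤ m :=
  (card_filter_le _ _).trans_eq (by simp)

lemma betaSet_add_val_add_one (j : Fin m) : betaSet m lam j + j + 1 = lam j + m := by
  have := j.isLt
  simp only [betaSet]
  omega

lemma betaSet_strictAnti_s13 (hlam : Antitone lam) : StrictAnti (betaSet m lam) := by
  intro a b hab
  have := hlam hab.le
  have := betaSet_add_val_add_one (lam := lam) a
  have := betaSet_add_val_add_one (lam := lam) b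
  have : (a : ℕ) < b := hab
  omega

lemma lt_rankP_iff (hlam : Antitone lam) (i : Fin m) :
    (i : ℕ) < rankP m lam ↔ (i : ℕ) < lam i := by
  refine ⟨fun hi => ?_, fun hi => Finset.le_sup (f := fun j : Fin m => (j : ℕ) + 1) (by simpa)⟩
  obtain ⟨j, hj, hij⟩ := (Finset.lt_sup_iff (f := fun j : Fin m => (j : ℕ) + 1)).1 hi
  have hji : i ≤ j := Nat.lt_succ_iff.1 hij
  have := hlam hji
  simp only [mem_filter, mem_univ, true_and] at hj
  omega

lemma rankP_le (m : ℕ) (lam : Fin m → ℕ) : rankP m lam ≤ m :=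
  Finset.sup_le fun j _ => j.isLt

lemma card_val_lt_rankP : #{i : Fin m | (i : ℕ) < rankP m lam} = rankP m lam := by
  rw [Fin.card_filter_val_lt, min_eq_right (rankP_le m lam)]

lemma lam_add_conjPart_ne (hlam : Antitone lam) (c : ℕ) (j : Fin m) :
    lam j + conjPart m lam c ≠ j + c := by
  by_cases h : c ≤ lam j
  · have : Iic j ⊆ univ.filter fun k => c ≤ lam k := fun k hk =>
      mem_filter.2 ⟨mem_univ _, h.trans (hlam (mem_Iic.1 hk))⟩
    have := card_le_card this
    rw [Fin.card_Iic] at this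
    simp only [conjPart]
    omega
  · have : (univ.filter fun k => c ≤ lam k) ⊆ Iio j := fun k hk => by
      simp only [mem_filter, mem_univ, true_and] at hk
      exact mem_Iio.2 (lt_of_not_ge fun hjk => h (hk.trans (hlam hjk)))
    have := card_le_card this
    rw [Fin.card_Iio] at this
    simp only [conjPart]
    omega

lemma card_range_sdiff_betaSet_le (hlam : Antitone lam) :
    #(range m \ univ.image (betaSet m lam)) ≤ rankP m lam := by
  set B := univ.image (betaSet m lam)
  have hB : #B = m := by
    rw [card_image_of_injective _ (betaSet_strictAnti_s13 hlam).injective, card_univ, Fintype.card_fin]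
  have hhigh : #(B \ range m) ≤ rankP m lam := by
    calc #(B \ range m)
        ≤ #((univ.filter fun j : Fin m => (j : ℕ) < rankP m lam).image (betaSet m lam)) := by
          refine card_le_card fun x hx => ?_
          simp only [B, mem_sdiff, mem_image, mem_univ, true_and, mem_range, not_lt] at hx
          obtain ⟨⟨j, rfl⟩, hj⟩ := hx
          have := betaSet_add_val_add_one (lam := lam) j
          exact mem_image_of_mem _ (by simp [lt_rankP_iff hlam]; omega)
      _ ≤ rankP m lam := card_image_le.trans card_val_lt_rankP.le
  have h1 := card_sdiff_add_card_inter (range m) B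
  have h2 := card_sdiff_add_card_inter B (range m)
  rw [inter_comm, hB] at h2
  simp only [card_range] at h1
  omega

lemma IsTCore.add_notMem_range {t x : ℕ} (hcore : IsTCore t m lam)
    (hx : x ∉ Set.range (betaSet m lam)) : x + t ∉ Set.range (betaSet m lam) := by
  rintro ⟨j, hj⟩
  obtain ⟨k, hk⟩ := hcore j (by omega)
  exact hx ⟨k, by omega⟩

lemma ZAsym.conjPart_eq {z : ℕ} (hasym : ZAsym (z : ℤ) m lam) {i : Fin m}
    (hi : (i : ℕ) < rankP m lam) :
    conjPart m lam (i + 1) = lam i + z := by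
  exact_mod_cast hasym i hi

lemma ZAsym.notMem_range_betaSet {z : ℕ} (hasym : ZAsym (z : ℤ) m lam) (hlam : Antitone lam)
    {i : Fin m} (hi : (i : ℕ) < rankP m lam) :
    m + i - (lam i + z) ∉ Set.range (betaSet m lam) := by
  rintro ⟨j, hj⟩
  have hconj := hasym.conjPart_eq hi
  have := lam_add_conjPart_ne hlam (i + 1) j
  have := conjPart_le (lam := lam) (i + 1)
  have := betaSet_add_val_add_one (lam := lam) j
  omega

lemma ZAsym.exists_eq_of_notMem_range {z : ℕ} (hasym : ZAsym (z : ℤ) m lam)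
    (hlam : Antitone lam) {x : ℕ} (hxm : x < m)
    (hx : x ∉ Set.range (betaSet m lam)) :
    ∃ i : Fin m, (i : ℕ) < rankP m lam ∧ x + (lam i + z) = m + i := by
  set G := (univ.filter fun i : Fin m => (i : ℕ) < rankP m lam).image
    fun i => m + i - (lam i + z)
  have hsub : G ⊆ range m \ univ.image (betaSet m lam) := by
    intro y hy
    obtain ⟨i, hi, rfl⟩ := mem_image.1 hy
    simp only [mem_filter, mem_univ, true_and] at hi
    have := (lt_rankP_iff hlam i).1 hi
    rw [mem_sdiff, mem_range, mem_image_univ_iff_mem_range]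
    exact ⟨by omega, hasym.notMem_range_betaSet hlam hi⟩
  have hcard : #G = rankP m lam := by
    rw [card_image_of_injOn, card_val_lt_rankP]
    intro a ha b hb hab
    simp only [coe_filter, mem_univ, true_and, Set.mem_ofPred_eq] at ha hb
    dsimp only at hab
    have := hasym.conjPart_eq ha
    have := hasym.conjPart_eq hb
    have := conjPart_le (lam := lam) (a + 1)
    have := conjPart_le (lam := lam) (b + 1)
    rcases le_total a b with h | h <;> have := hlam h <;> ext <;> omega
  have heq := eq_of_subset_of_card_le hsub (hcard.symm ▸ card_range_sdiff_betaSet_le hlam)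
  have hxmem : x ∈ range m \ univ.image (betaSet m lam) := by
    rw [mem_sdiff, mem_range, mem_image_univ_iff_mem_range]
    exact ⟨hxm, hx⟩
  rw [← heq] at hxmem
  obtain ⟨i, hi, hgap⟩ := mem_image.1 hxmem
  simp only [mem_filter, mem_univ, true_and] at hi
  have := hasym.conjPart_eq hi
  have := conjPart_le (lam := lam) (i + 1)
  exact ⟨i, hi, by omega⟩

lemma ZAsym.add_lt_of_notMem_range {z t x : ℕ} (hasym : ZAsym (z : ℤ) m lam)
    (hlam : Antitone lam) (hcore : IsTCore t m lam) (htz : t ≤ z + 1)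
    (hxm : x < m) (hx : x ∉ Set.range (betaSet m lam)) :
    x + t < m ∧ x + t ∉ Set.range (betaSet m lam) := by
  have hxt := hcore.add_notMem_range hx
  refine ⟨?_, hxt⟩
  obtain ⟨i, hi, hgap⟩ := hasym.exists_eq_of_notMem_range hlam hxm hx
  have hdiag := (lt_rankP_iff hlam i).1 hi
  by_contra! hmx
  -- then `x + t = m` and `λ_i = i + 1`, so `m = β_i`
  have := betaSet_add_val_add_one (lam := lam) i
  exact hxt ⟨i, by omega⟩

end Partition

theorem zAsymmetric_tcore_trivial_general
    (z t : ℕ) (ht : 2 ≤ t) (htz : t ≤ z + 1)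
    (m : ℕ) (lam : Fin m → ℕ)
    (hanti : ∀ j k : Fin m, j ≤ k → lam k ≤ lam j)
    (hcore : IsTCore t m lam)
    (hasym : ZAsym (z : ℤ) m lam) :
    ∀ j : Fin m, lam j = 0 := by
  intro j
  by_contra hj
  have hlam : Antitone lam := fun a b => hanti a b
  set i₀ : Fin m := ⟨0, j.pos⟩
  have hi₀ : (i₀ : ℕ) < rankP m lam := (lt_rankP_iff hlam i₀).2 <|
    (Nat.pos_of_ne_zero hj).trans_le (hlam (show i₀ ≤ j from Nat.zero_le _))
  set x := m + i₀ - (lam i₀ + z)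
  have hx : ∀ k, x + k * t < m ∧ x + k * t ∉ Set.range (betaSet m lam) := by
    intro k
    induction k with
    | zero =>
      have := (lt_rankP_iff hlam i₀).1 hi₀
      refine ⟨?_, by simpa using hasym.notMem_range_betaSet hlam hi₀⟩
      simp only [x, i₀] at this ⊢
      omega
    | succ k ih =>
      rw [add_one_mul, ← add_assoc]
      exact hasym.add_lt_of_notMem_range hlam hcore htz ih.1 ih.2
  have := (hx m).1
  nlinarith

/-- For `2 ≤ t ≤ z + 1`, the empty partition is the only `z`-asymmetric `t`-core. -/
theorem zAsymmetric_tcore_trivial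
    (z t : ℕ) (hz : 1 ≤ z) (ht : 2 ≤ t) (htz : t ≤ z + 1)
    (m : ℕ) (lam : Fin m → ℕ)
    (hanti : ∀ j k : Fin m, j ≤ k → lam k ≤ lam j)
    (hcore : IsTCore t m lam)
    (hasym : ZAsym (z : ℤ) m lam) :
    ∀ j : Fin m, lam j = 0 :=
  zAsymmetric_tcore_trivial_general z t ht htz m lam hanti hcore hasym
end
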